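/- arXiv:gr-qc/9806113 — 11 statements merged into one kernel-verified Lean document; each statement's English description precedes it below -/
import Mathlib

section
/- If a solution (p,q) of the planar system on an interval I satisfies p(τ₀)² + q(τ₀)² = 1 for some τ₀ ∈ I, then p(τ)² + q(τ)² = 1 for all τ ∈ I; that is, the unit circle is an invariant set of the flow. -/
/-!
Along the flow, the defect `f = p² + q² - 1` satisfies the linear equation
`f' = 2 (q² + α q) f`. A scalar linear ODE with continuous coefficient has Lipschitz right-hand
side on every compact time interval, so by Grönwall's inequality a solution vanishing at one time
vanishes identically.
-/

open Set

section LinearODE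

variable {f c : ℝ → ℝ} {a b : ℝ}

theorem eq_zero_of_hasDerivAt_mul_self_of_eq_zero_right (hc : ContinuousOn c (Icc a b))
    (hf : ∀ t ∈ Icc a b, HasDerivAt f (c t * f t) t) (ha : f a = 0) :
    ∀ t ∈ Icc a b, f t = 0 := by
  obtain ⟨K, hK⟩ := isCompact_Icc.exists_bound_of_continuousOn hc
  refine eq_zero_of_abs_deriv_le_mul_abs_self_of_eq_zero_right (K := K)
    (fun t ht => (hf t ht).continuousAt.continuousWithinAt)
    (fun t ht => (hf t (Ico_subset_Icc_self ht)).hasDerivWithinAt) ha fun t ht => ?_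
  rw [norm_mul]
  exact mul_le_mul_of_nonneg_right (hK t (Ico_subset_Icc_self ht)) (norm_nonneg _)

theorem eq_zero_of_hasDerivAt_mul_self_of_eq_zero_left (hc : ContinuousOn c (Icc a b))
    (hf : ∀ t ∈ Icc a b, HasDerivAt f (c t * f t) t) (hb : f b = 0) :
    ∀ t ∈ Icc a b, f t = 0 := by
  have hc' : ContinuousOn (fun t => -c (-t)) (Icc (-b) (-a)) :=
    (hc.comp continuous_neg.continuousOn fun t ht => ⟨le_neg.mpr ht.2, neg_le.mpr ht.1⟩).neg
  have hf' : ∀ t ∈ Icc (-b) (-a), HasDerivAt (fun t => f (-t)) (-c (-t) * f (-t)) t := by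
    intro t ht
    have hneg : -t ∈ Icc a b := ⟨le_neg.mpr ht.2, neg_le.mpr ht.1⟩
    exact ((hf (-t) hneg).comp t (hasDerivAt_neg t)).congr_deriv (by ring)
  intro t ht
  simpa using eq_zero_of_hasDerivAt_mul_self_of_eq_zero_right hc' hf' (by simpa using hb) (-t)
    ⟨neg_le_neg ht.2, neg_le_neg ht.1⟩

theorem Set.OrdConnected.eq_zero_of_hasDerivAt_mul_self {I : Set ℝ} (hI : I.OrdConnected)
    (hc : ContinuousOn c I) (hf : ∀ t ∈ I, HasDerivAt f (c t * f t) t) {t₀ : ℝ} (ht₀ : t₀ ∈ I)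
    (h₀ : f t₀ = 0) : ∀ t ∈ I, f t = 0 := by
  intro t ht
  rcases le_total t₀ t with hle | hle
  · have hsub : Icc t₀ t ⊆ I := hI.out ht₀ ht
    exact eq_zero_of_hasDerivAt_mul_self_of_eq_zero_right (hc.mono hsub)
      (fun s hs => hf s (hsub hs)) h₀ t (right_mem_Icc.mpr hle)
  · have hsub : Icc t t₀ ⊆ I := hI.out ht ht₀
    exact eq_zero_of_hasDerivAt_mul_self_of_eq_zero_left (hc.mono hsub)
      (fun s hs => hf s (hsub hs)) h₀ t (left_mem_Icc.mpr hle)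

end LinearODE

theorem stmt1_general (α : ℝ) (I : Set ℝ) (hI : I.OrdConnected) (p q : ℝ → ℝ)
    (hp : ∀ τ ∈ I, HasDerivAt p (p τ * (q τ) ^ 2 - α * p τ * q τ) τ)
    (hq : ∀ τ ∈ I,
      HasDerivAt q ((q τ) ^ 3 + α * (q τ) ^ 2 - q τ - α + 2 * α * (p τ) ^ 2) τ)
    (τ₀ : ℝ) (hτ₀ : τ₀ ∈ I) (hcirc : (p τ₀) ^ 2 + (q τ₀) ^ 2 = 1) :
    ∀ τ ∈ I, (p τ) ^ 2 + (q τ) ^ 2 = 1 := by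
  have hqc : ContinuousOn q I := fun τ hτ => (hq τ hτ).continuousAt.continuousWithinAt
  have hcoeff : ContinuousOn (fun τ => 2 * q τ ^ 2 + 2 * α * q τ) I := by fun_prop
  have hdefect : ∀ τ ∈ I, HasDerivAt (fun τ => p τ ^ 2 + q τ ^ 2 - 1)
      ((2 * q τ ^ 2 + 2 * α * q τ) * (p τ ^ 2 + q τ ^ 2 - 1)) τ := by
    intro τ hτ
    exact ((((hp τ hτ).fun_pow 2).add ((hq τ hτ).fun_pow 2)).sub_const 1).congr_deriv (by ring)
  intro τ hτ
  have hdefect_zero :=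
    hI.eq_zero_of_hasDerivAt_mul_self hcoeff hdefect hτ₀ (by simp [hcirc]) τ hτ
  linarith

/-- If a solution `(p,q)` of the planar system on an interval `I` satisfies
`p(τ₀)² + q(τ₀)² = 1` for some `τ₀ ∈ I`, then `p(τ)² + q(τ)² = 1` for all `τ ∈ I`;
the unit circle is an invariant set of the flow. -/
theorem stmt1 (α : ℝ) (hα : 0 < α) (I : Set ℝ) (hI : I.OrdConnected) (p q : ℝ → ℝ)
    (hp : ∀ τ ∈ I, HasDerivAt p (p τ * (q τ) ^ 2 - α * p τ * q τ) τ)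
    (hq : ∀ τ ∈ I,
      HasDerivAt q ((q τ) ^ 3 + α * (q τ) ^ 2 - q τ - α + 2 * α * (p τ) ^ 2) τ)
    (τ₀ : ℝ) (hτ₀ : τ₀ ∈ I) (hcirc : (p τ₀) ^ 2 + (q τ₀) ^ 2 = 1) :
    ∀ τ ∈ I, (p τ) ^ 2 + (q τ) ^ 2 = 1 :=
  stmt1_general α I hI p q hp hq τ₀ hτ₀ hcirc
end

section
/- If a solution (p,q) of the planar system on an interval I satisfies (p(τ₀), q(τ₀)) ∈ Ω for some τ₀ ∈ I, then (p(τ), q(τ)) ∈ Ω for all τ ∈ I; that is, the physical phase space Ω is an invariant set of the flow in both time directions. -/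
/-!
Both `p` and the defect `1 - p² - q²` solve linear scalar ODEs,
`p' = (q² - α q) p` and `(1 - p² - q²)' = 2 (q² + α q) (1 - p² - q²)`,
with coefficients continuous along the solution. By uniqueness for `u' = c u`, a solution that
vanishes at one time vanishes identically, so by the intermediate value theorem neither `p` nor
the defect can change sign on the interval.
-/

/-- The physical phase space `Ω = {(p,q) : p > 0 ∧ p² + q² < 1}`. -/
def Omega : Set (ℝ × ℝ) := {x : ℝ × ℝ | 0 < x.1 ∧ x.1 ^ 2 + x.2 ^ 2 < 1}

open Set

section LinearODE

variable {u c : ℝ → ℝ} {a b : ℝ}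

theorem eqOn_zero_of_hasDerivAt_mul_self_Icc (hc : ContinuousOn c (Icc a b))
    (hu : ∀ t ∈ Icc a b, HasDerivAt u (c t * u t) t) (h : u a = 0 ∨ u b = 0) :
    EqOn u 0 (Icc a b) := by
  obtain ⟨C, hC⟩ := isCompact_Icc.exists_bound_of_continuousOn hc
  have hlip (t : ℝ) (ht : t ∈ Icc a b) :
      LipschitzOnWith C.toNNReal (c t * · : ℝ → ℝ) univ :=
    ((lipschitzWith_smul (c t)).weaken (NNReal.le_toNNReal_of_coe_le (hC t ht))).lipschitzOnWith
  have hu_cont : ContinuousOn u (Icc a b) := fun t ht => (hu t ht).continuousAt.continuousWithinAt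
  rcases h with ha | hb
  · exact ODE_solution_unique_of_mem_Icc_right (v := fun t x => c t * x) (s := fun _ => univ)
      (g := fun _ => 0) (fun t ht => hlip t (Ico_subset_Icc_self ht)) hu_cont
      (fun t ht => (hu t (Ico_subset_Icc_self ht)).hasDerivWithinAt) (fun _ _ => trivial)
      continuousOn_const (fun t _ => by simpa using hasDerivWithinAt_const t _ (0 : ℝ))
      (fun _ _ => trivial) ha
  · exact ODE_solution_unique_of_mem_Icc_left (v := fun t x => c t * x) (s := fun _ => univ)
      (g := fun _ => 0) (fun t ht => hlip t (Ioc_subset_Icc_self ht)) hu_cont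
      (fun t ht => (hu t (Ioc_subset_Icc_self ht)).hasDerivWithinAt) (fun _ _ => trivial)
      continuousOn_const (fun t _ => by simpa using hasDerivWithinAt_const t _ (0 : ℝ))
      (fun _ _ => trivial) hb

theorem eq_zero_of_hasDerivAt_mul_self {I : Set ℝ} (hI : I.OrdConnected) (hc : ContinuousOn c I)
    (hu : ∀ t ∈ I, HasDerivAt u (c t * u t) t) (ha : a ∈ I) (hb : b ∈ I) (hub : u b = 0) :
    u a = 0 := by
  rcases le_total a b with hab | hba
  · exact eqOn_zero_of_hasDerivAt_mul_self_Icc (hc.mono (hI.out ha hb))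
      (fun t ht => hu t (hI.out ha hb ht)) (Or.inr hub) (left_mem_Icc.2 hab)
  · exact eqOn_zero_of_hasDerivAt_mul_self_Icc (hc.mono (hI.out hb ha))
      (fun t ht => hu t (hI.out hb ha ht)) (Or.inl hub) (right_mem_Icc.2 hba)

theorem pos_of_hasDerivAt_mul_self {I : Set ℝ} (hI : I.OrdConnected) (hc : ContinuousOn c I)
    (hu : ∀ t ∈ I, HasDerivAt u (c t * u t) t) (ha : a ∈ I) (hb : b ∈ I) (hua : 0 < u a) :
    0 < u b := by
  by_contra! hub
  have hsub : uIcc a b ⊆ I := hI.uIcc_subset ha hb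
  obtain ⟨s, hs, hus⟩ := intermediate_value_uIcc
    (fun t ht => (hu t (hsub ht)).continuousAt.continuousWithinAt)
    (mem_uIcc.2 (Or.inr ⟨hub, hua.le⟩))
  exact hua.ne' (eq_zero_of_hasDerivAt_mul_self hI hc hu ha (hsub hs) hus)

end LinearODE

theorem stmt2_general (α : ℝ) (I : Set ℝ) (hI : I.OrdConnected) (p q : ℝ → ℝ)
    (hp : ∀ τ ∈ I, HasDerivAt p (p τ * (q τ) ^ 2 - α * p τ * q τ) τ)
    (hq : ∀ τ ∈ I,
      HasDerivAt q ((q τ) ^ 3 + α * (q τ) ^ 2 - q τ - α + 2 * α * (p τ) ^ 2) τ)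
    (τ₀ : ℝ) (hτ₀ : τ₀ ∈ I) (hmem : (p τ₀, q τ₀) ∈ Omega) :
    ∀ τ ∈ I, (p τ, q τ) ∈ Omega := by
  have hq_cont : ContinuousOn q I := fun τ hτ => (hq τ hτ).continuousAt.continuousWithinAt
  have hp_lin (τ : ℝ) (hτ : τ ∈ I) : HasDerivAt p ((q τ ^ 2 - α * q τ) * p τ) τ :=
    (hp τ hτ).congr_deriv (by ring)
  have hdefect_lin (τ : ℝ) (hτ : τ ∈ I) : HasDerivAt (fun τ => 1 - p τ ^ 2 - q τ ^ 2)
      (2 * (q τ ^ 2 + α * q τ) * (1 - p τ ^ 2 - q τ ^ 2)) τ := by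
    refine ((((hp τ hτ).fun_pow 2).const_sub 1).fun_sub ((hq τ hτ).fun_pow 2)).congr_deriv ?_
    push_cast; ring
  intro τ hτ
  refine ⟨pos_of_hasDerivAt_mul_self hI (by fun_prop) hp_lin hτ₀ hτ hmem.1, ?_⟩
  have := pos_of_hasDerivAt_mul_self hI (by fun_prop) hdefect_lin hτ₀ hτ (by linarith [hmem.2])
  linarith

/-- If a solution `(p,q)` of the planar system on an interval `I` satisfies
`(p(τ₀), q(τ₀)) ∈ Ω` for some `τ₀ ∈ I`, then `(p(τ), q(τ)) ∈ Ω` for all `τ ∈ I`;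
the physical phase space `Ω` is invariant in both time directions. -/
theorem stmt2 (α : ℝ) (hα : 0 < α) (I : Set ℝ) (hI : I.OrdConnected) (p q : ℝ → ℝ)
    (hp : ∀ τ ∈ I, HasDerivAt p (p τ * (q τ) ^ 2 - α * p τ * q τ) τ)
    (hq : ∀ τ ∈ I,
      HasDerivAt q ((q τ) ^ 3 + α * (q τ) ^ 2 - q τ - α + 2 * α * (p τ) ^ 2) τ)
    (τ₀ : ℝ) (hτ₀ : τ₀ ∈ I) (hmem : (p τ₀, q τ₀) ∈ Omega) :
    ∀ τ ∈ I, (p τ, q τ) ∈ Omega :=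
  stmt2_general α I hI p q hp hq τ₀ hτ₀ hmem
end

section
/- If a solution (p,q) of the planar system on an interval I satisfies p(τ) ≥ 0 and p(τ)² + q(τ)² ≤ 1 for all τ ∈ I, then the function τ ↦ H(p(τ), q(τ)) is monotone nondecreasing on I. -/
/-- The function `H(p,q) = p² (1 − p² − q²)`. -/
noncomputable def H (p q : ℝ) : ℝ := p ^ 2 * (1 - p ^ 2 - q ^ 2)

/-!
Along a solution, `dH/dτ = 4 p² q² (1 − p² − q²)`: the terms involving `α` cancel. In the region
`p² + q² ≤ 1` this derivative is nonnegative, so `H` increases along the flow by the mean value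
theorem.
-/

theorem hasDerivAt_H_comp {p q : ℝ → ℝ} {p' q' τ : ℝ} (hp : HasDerivAt p p' τ)
    (hq : HasDerivAt q q' τ) :
    HasDerivAt (fun t => H (p t) (q t))
      (2 * p τ * p' * (1 - p τ ^ 2 - q τ ^ 2) - p τ ^ 2 * (2 * p τ * p' + 2 * q τ * q')) τ := by
  have h := (hp.fun_pow 2).fun_mul (((hasDerivAt_const τ (1 : ℝ)).fun_sub (hp.fun_pow 2)).fun_sub
    (hq.fun_pow 2))
  unfold H
  exact h.congr_deriv (by push_cast; ring)

theorem hasDerivAt_H_along_solution (α : ℝ) {p q : ℝ → ℝ} {τ : ℝ}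
    (hp : HasDerivAt p (p τ * q τ ^ 2 - α * p τ * q τ) τ)
    (hq : HasDerivAt q (q τ ^ 3 + α * q τ ^ 2 - q τ - α + 2 * α * p τ ^ 2) τ) :
    HasDerivAt (fun t => H (p t) (q t)) (4 * p τ ^ 2 * q τ ^ 2 * (1 - p τ ^ 2 - q τ ^ 2)) τ :=
  (hasDerivAt_H_comp hp hq).congr_deriv (by ring)

theorem stmt3_general (α : ℝ) (I : Set ℝ) (hI : I.OrdConnected) (p q : ℝ → ℝ)
    (hp : ∀ τ ∈ I, HasDerivAt p (p τ * (q τ) ^ 2 - α * p τ * q τ) τ)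
    (hq : ∀ τ ∈ I,
      HasDerivAt q ((q τ) ^ 3 + α * (q τ) ^ 2 - q τ - α + 2 * α * (p τ) ^ 2) τ)
    (hle : ∀ τ ∈ I, (p τ) ^ 2 + (q τ) ^ 2 ≤ 1) :
    MonotoneOn (fun τ => H (p τ) (q τ)) I := by
  have hH : ∀ τ ∈ I, HasDerivAt (fun t => H (p t) (q t))
      (4 * p τ ^ 2 * q τ ^ 2 * (1 - p τ ^ 2 - q τ ^ 2)) τ :=
    fun τ hτ => hasDerivAt_H_along_solution α (hp τ hτ) (hq τ hτ)
  refine monotoneOn_of_hasDerivWithinAt_nonneg hI.convex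
    (fun τ hτ => (hH τ hτ).continuousAt.continuousWithinAt)
    (fun τ hτ => (hH τ (interior_subset hτ)).hasDerivWithinAt) fun τ hτ => ?_
  have hdisk : 0 ≤ 1 - p τ ^ 2 - q τ ^ 2 := by linarith [hle τ (interior_subset hτ)]
  positivity

/-- If a solution `(p,q)` of the planar system on an interval `I` satisfies `p(τ) ≥ 0` and
`p(τ)² + q(τ)² ≤ 1` for all `τ ∈ I`, then `τ ↦ H(p(τ), q(τ))` is monotone
nondecreasing on `I`. -/
theorem stmt3 (α : ℝ) (hα : 0 < α) (I : Set ℝ) (hI : I.OrdConnected) (p q : ℝ → ℝ)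
    (hp : ∀ τ ∈ I, HasDerivAt p (p τ * (q τ) ^ 2 - α * p τ * q τ) τ)
    (hq : ∀ τ ∈ I,
      HasDerivAt q ((q τ) ^ 3 + α * (q τ) ^ 2 - q τ - α + 2 * α * (p τ) ^ 2) τ)
    (hpos : ∀ τ ∈ I, 0 ≤ p τ) (hle : ∀ τ ∈ I, (p τ) ^ 2 + (q τ) ^ 2 ≤ 1) :
    MonotoneOn (fun τ => H (p τ) (q τ)) I :=
  stmt3_general α I hI p q hp hq hle
end

section
/- Assume 0 < α < 1. The set of equilibrium points of the planar system lying in the closed physical region, i.e. the set of (p,q) ∈ ℝ² with p ≥ 0, p² + q² ≤ 1, p q² − α p q = 0 and q³ + α q² − q − α + 2 α p² = 0, is exactly the five-point set {(1/√2, 0), (√(1 − α²), α), (0, 1), (0, −1), (0, −α)}. -/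
/-!
The first equation factors as `p q (q - α) = 0` and the second as
`(q - 1)(q + 1)(q + α) + 2αp² = 0`. So an equilibrium has `p = 0` and `q ∈ {1, -1, -α}`,
or `q = 0` and `p² = 1/2`, or `q = α` and `p² = 1 - α²`. All of these lie in the closed unit
disc once `α² ≤ 1`, and `p ≥ 0` singles out the nonnegative square root.
-/

theorem equilibrium_equations_iff {α p q : ℝ} (hα : α ≠ 0) :
    (p * q ^ 2 - α * p * q = 0 ∧ q ^ 3 + α * q ^ 2 - q - α + 2 * α * p ^ 2 = 0) ↔
      (p = 0 ∧ (q = 1 ∨ q = -1 ∨ q = -α)) ∨ (q = 0 ∧ p ^ 2 = 1 / 2) ∨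
        (q = α ∧ p ^ 2 = 1 - α ^ 2) := by
  constructor
  · rintro ⟨h₁, h₂⟩
    have h₁' : p * q * (q - α) = 0 := by linear_combination h₁
    rcases mul_eq_zero.mp h₁' with hpq | hq
    · rcases mul_eq_zero.mp hpq with rfl | rfl
      · have : (q - 1) * (q + 1) * (q + α) = 0 := by linear_combination h₂
        rcases mul_eq_zero.mp this with h | h
        · rcases mul_eq_zero.mp h with h | h
          · exact .inl ⟨rfl, .inl (by linarith)⟩
          · exact .inl ⟨rfl, .inr (.inl (by linarith))⟩
        · exact .inl ⟨rfl, .inr (.inr (by linarith))⟩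
      · refine .inr (.inl ⟨rfl, mul_left_cancel₀ (mul_ne_zero two_ne_zero hα) ?_⟩)
        linear_combination h₂
    · obtain rfl : q = α := by linarith
      refine .inr (.inr ⟨rfl, mul_left_cancel₀ (mul_ne_zero two_ne_zero hα) ?_⟩)
      linear_combination h₂
  · rintro (⟨rfl, rfl | rfl | rfl⟩ | ⟨rfl, hp⟩ | ⟨hq, hp⟩)
    · constructor <;> ring
    · constructor <;> ring
    · constructor <;> ring
    · exact ⟨by ring, by linear_combination 2 * α * hp⟩
    · subst q
      exact ⟨by ring, by linear_combination 2 * α * hp⟩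

theorem Real.eq_sqrt_iff_sq_eq {p c : ℝ} (hc : 0 ≤ c) : (0 ≤ p ∧ p ^ 2 = c) ↔ p = √c := by
  constructor
  · rintro ⟨hp, rfl⟩
    exact (Real.sqrt_sq hp).symm
  · rintro rfl
    exact ⟨Real.sqrt_nonneg c, Real.sq_sqrt hc⟩

/-- For `0 < α < 1`, the set of equilibrium points of the planar system lying
in the closed physical region is exactly the five-point set
`{(1/√2, 0), (√(1 − α²), α), (0, 1), (0, −1), (0, −α)}`. -/
theorem stmt4 (α : ℝ) (hα0 : 0 < α) (hα1 : α < 1) :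
    {x : ℝ × ℝ | 0 ≤ x.1 ∧ x.1 ^ 2 + x.2 ^ 2 ≤ 1 ∧
        x.1 * x.2 ^ 2 - α * x.1 * x.2 = 0 ∧
        x.2 ^ 3 + α * x.2 ^ 2 - x.2 - α + 2 * α * x.1 ^ 2 = 0} =
      ({(1 / Real.sqrt 2, 0), (Real.sqrt (1 - α ^ 2), α), (0, 1), (0, -1), (0, -α)} :
        Set (ℝ × ℝ)) := by
  have hα2 : 0 ≤ 1 - α ^ 2 := by nlinarith
  have hsqrt2 : 1 / √2 = √(1 / 2) := by rw [one_div, one_div, Real.sqrt_inv]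
  ext ⟨p, q⟩
  simp only [Set.mem_ofPred_eq, Set.mem_insert_iff, Set.mem_singleton_iff, Prod.mk.injEq,
    equilibrium_equations_iff hα0.ne', hsqrt2]
  have hhalf : (0 : ℝ) ≤ 1 / 2 := by norm_num
  constructor
  · rintro ⟨hp, -, ⟨rfl, rfl | rfl | rfl⟩ | ⟨rfl, hp2⟩ | ⟨hq, hp2⟩⟩
    · exact .inr (.inr (.inl ⟨rfl, rfl⟩))
    · exact .inr (.inr (.inr (.inl ⟨rfl, rfl⟩)))
    · exact .inr (.inr (.inr (.inr ⟨rfl, rfl⟩)))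
    · exact .inl ⟨(Real.eq_sqrt_iff_sq_eq hhalf).mp ⟨hp, hp2⟩, rfl⟩
    · exact .inr (.inl ⟨(Real.eq_sqrt_iff_sq_eq hα2).mp ⟨hp, hp2⟩, hq⟩)
  · rintro (⟨rfl, rfl⟩ | ⟨rfl, rfl⟩ | ⟨rfl, rfl⟩ | ⟨rfl, rfl⟩ | ⟨rfl, rfl⟩)
    · obtain ⟨hp, hp2⟩ := (Real.eq_sqrt_iff_sq_eq hhalf).mpr rfl
      exact ⟨hp, by norm_num [hp2], .inr (.inl ⟨rfl, hp2⟩)⟩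
    · obtain ⟨hp, hp2⟩ := (Real.eq_sqrt_iff_sq_eq hα2).mpr rfl
      exact ⟨hp, by rw [hp2, sub_add_cancel], .inr (.inr ⟨rfl, hp2⟩)⟩
    · norm_num
    · norm_num
    · exact ⟨le_rfl, by nlinarith, .inl ⟨rfl, .inr (.inr rfl)⟩⟩
end

section
/- Assume α > 1. The set of equilibrium points of the planar system lying in the closed physical region, i.e. the set of (p,q) ∈ ℝ² with p ≥ 0, p² + q² ≤ 1, p q² − α p q = 0 and q³ + α q² − q − α + 2 α p² = 0, is exactly the three-point set {(1/√2, 0), (0, 1), (0, −1)}. -/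
/-!
The first equation factors as `p q (q - α) = 0`. The branch `q = α` leaves the unit disk since
`α > 1`; on `q = 0` the second equation reads `α (2 p² - 1) = 0`, so `p = 1/√2`; on `p = 0` it
factors as `(q - 1)(q + 1)(q + α) = 0`, and the root `q = -α` again leaves the disk.
-/

lemma eq_one_div_sqrt_two_of_sq_eq {p : ℝ} (hp : 0 ≤ p) (h : p ^ 2 = 1 / 2) : p = 1 / √2 := by
  rw [one_div, ← Real.sqrt_inv, ← one_div, ← h, Real.sqrt_sq hp]

lemma one_div_sqrt_two_sq : (1 / √2 : ℝ) ^ 2 = 1 / 2 := by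
  rw [div_pow, one_pow, Real.sq_sqrt zero_le_two]

section Equilibria

variable {α p q : ℝ}

lemma eq_zero_or_eq_zero_or_eq_of_mul_sq_sub_eq_zero (h : p * q ^ 2 - α * p * q = 0) :
    p = 0 ∨ q = 0 ∨ q = α := by
  have hfactor : p * q * (q - α) = 0 := by linear_combination h
  rcases mul_eq_zero.mp hfactor with hpq | hq
  · exact (mul_eq_zero.mp hpq).imp_right Or.inl
  · exact Or.inr (Or.inr (sub_eq_zero.mp hq))

lemma eq_one_or_eq_neg_one_of_cubic_eq_zero (hα : 1 < α) (hq : q ^ 2 ≤ 1)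
    (h : q ^ 3 + α * q ^ 2 - q - α = 0) : q = 1 ∨ q = -1 := by
  have hfactor : (q - 1) * (q + 1) * (q + α) = 0 := by linear_combination h
  rcases mul_eq_zero.mp hfactor with h' | h'
  · rcases mul_eq_zero.mp h' with h' | h'
    · exact Or.inl (by linarith)
    · exact Or.inr (by linarith)
  · nlinarith

end Equilibria

/-- For `α > 1`, the set of equilibrium points of the planar system lying in the
closed physical region is exactly the three-point set `{(1/√2, 0), (0, 1), (0, −1)}`. -/
theorem stmt5 (α : ℝ) (hα : 1 < α) :
    {x : ℝ × ℝ | 0 ≤ x.1 ∧ x.1 ^ 2 + x.2 ^ 2 ≤ 1 ∧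
        x.1 * x.2 ^ 2 - α * x.1 * x.2 = 0 ∧
        x.2 ^ 3 + α * x.2 ^ 2 - x.2 - α + 2 * α * x.1 ^ 2 = 0} =
      ({(1 / Real.sqrt 2, 0), (0, 1), (0, -1)} : Set (ℝ × ℝ)) := by
  ext ⟨p, q⟩
  simp only [Set.mem_ofPred_eq, Set.mem_insert_iff, Set.mem_singleton_iff, Prod.mk.injEq]
  constructor
  · rintro ⟨hp, hdisk, hdp, hdq⟩
    have hq : q ^ 2 ≤ 1 := by nlinarith [sq_nonneg p]
    rcases eq_zero_or_eq_zero_or_eq_of_mul_sq_sub_eq_zero hdp with rfl | rfl | rfl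
    · right
      rcases eq_one_or_eq_neg_one_of_cubic_eq_zero hα hq (by linear_combination hdq) with h | h
      exacts [Or.inl ⟨rfl, h⟩, Or.inr ⟨rfl, h⟩]
    · have hp_sq : p ^ 2 = 1 / 2 := by
        have hα0 : α ≠ 0 := (zero_lt_one.trans hα).ne'
        apply mul_left_cancel₀ hα0
        linear_combination hdq / 2
      exact Or.inl ⟨eq_one_div_sqrt_two_of_sq_eq hp hp_sq, rfl⟩
    · nlinarith
  · rintro (⟨rfl, rfl⟩ | ⟨rfl, rfl⟩ | ⟨rfl, rfl⟩)
    · refine ⟨by positivity, ?_, by ring, ?_⟩ <;> rw [one_div_sqrt_two_sq] <;> linarith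
    all_goals norm_num
end

section
/- Let (p,q) be a solution of the planar system on [τ₀, ∞) with (p(τ), q(τ)) ∈ Ω for all τ ≥ τ₀. Then (p(τ), q(τ)) → (1/√2, 0) as τ → ∞; that is, the de Sitter equilibrium (1/√2, 0) is a global attractor for all physical trajectories. -/
/-!
`G = (1 - p² - q²) p²` is a Lyapunov function: along solutions `G' = 4 q² G`, so on `Ω` it
increases, and being bounded by `1/4` it converges. Since `q'` is bounded, `q` is Lipschitz, and
a Barbalat-type argument turns the convergence of `G` (with `G' ≥ 4 G(τ₀) q²`) into `q → 0`.
Then `(p² - 1/2)² = 1/4 - G - p²q²` converges, so by continuity `p² - 1/2 → c` for some `c`,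
and `q' = q³ + αq² - q + 2α (p² - 1/2) → 2αc`. A bounded function cannot have a derivative with
nonzero limit, so `c = 0`, i.e. `p → 1/√2`.
-/

open Set Filter Topology

theorem Convex.mul_sub_le_sub_of_hasDerivAt_ge {s : Set ℝ} (hs : Convex ℝ s) {f f' : ℝ → ℝ}
    (hf : ∀ x ∈ s, HasDerivAt f (f' x) x) {C : ℝ} (hC : ∀ x ∈ s, C ≤ f' x)
    {x y : ℝ} (hx : x ∈ s) (hy : y ∈ s) (hxy : x ≤ y) : C * (y - x) ≤ f y - f x :=
  hs.mul_sub_le_image_sub_of_le_deriv (fun z hz => (hf z hz).continuousAt.continuousWithinAt)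
    (fun z hz => (hf z (interior_subset hz)).differentiableAt.differentiableWithinAt)
    (fun z hz => (hf z (interior_subset hz)).deriv ▸ hC z (interior_subset hz)) x hx y hy hxy

theorem MonotoneOn.exists_tendsto_atTop {α β : Type*} [LinearOrder α]
    [ConditionallyCompleteLinearOrder β] [TopologicalSpace β] [OrderTopology β]
    {f : α → β} {a : α} (hf : MonotoneOn f (Ici a)) (hbdd : BddAbove (f '' Ici a)) :
    ∃ L, Tendsto f atTop (𝓝 L) := by
  have hmono : Monotone fun t => f (max t a) := fun s t hst =>
    hf (le_max_right s a) (le_max_right t a) (max_le_max hst le_rfl)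
  have hrange : BddAbove (range fun t => f (max t a)) :=
    hbdd.mono (range_subset_iff.2 fun t => mem_image_of_mem f (le_max_right t a))
  refine ⟨_, (tendsto_atTop_ciSup hmono hrange).congr' ?_⟩
  filter_upwards [eventually_ge_atTop a] with t ht
  rw [max_eq_left ht]

theorem exists_tendsto_of_tendsto_abs {f : ℝ → ℝ} {m : ℝ}
    (hf : ∀ᶠ t in atTop, ContinuousAt f t) (h : Tendsto (fun t => |f t|) atTop (𝓝 m)) :
    ∃ c, Tendsto f atTop (𝓝 c) := by
  rcases eq_or_ne m 0 with rfl | hm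
  · exact ⟨0, tendsto_zero_iff_abs_tendsto_zero f |>.2 h⟩
  have hm : 0 < m := (ge_of_tendsto' h fun t => abs_nonneg (f t)).lt_of_ne' hm
  obtain ⟨T, hT⟩ := eventually_atTop.1 (hf.and (h.eventually (lt_mem_nhds hm)))
  have hcont : ContinuousOn f (Ici T) := fun t ht => (hT t ht).1.continuousWithinAt
  -- on `[T, ∞)` the function has no zero, so by connectedness it has a constant sign
  rcases isPreconnected_Ici.eq_or_eq_neg_of_sq_eq hcont hcont.abs (fun t _ => (sq_abs (f t)).symm)
    (fun ht => (hT _ ht).2.ne') with hpos | hneg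
  · exact ⟨m, h.congr' (eventually_atTop.2 ⟨T, fun t ht => (hpos ht).symm⟩)⟩
  · exact ⟨-m, h.neg.congr' (eventually_atTop.2 ⟨T, fun t ht => (hneg ht).symm⟩)⟩

theorem eq_zero_of_tendsto_deriv_of_bounded {f f' : ℝ → ℝ} {c B : ℝ}
    (hf : ∀ᶠ t in atTop, HasDerivAt f (f' t) t) (hf' : Tendsto f' atTop (𝓝 c))
    (hB : ∀ᶠ t in atTop, |f t| ≤ B) : c = 0 := by
  wlog hc : 0 < c generalizing f f' c
  · rcases (not_lt.1 hc).lt_or_eq with hc | rfl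
    · have := this (f := -f) (f' := -f') (hf.mono fun t ht => ht.neg) hf'.neg
        (hB.mono fun t ht => by rwa [Pi.neg_apply, abs_neg]) (neg_pos.2 hc)
      linarith
    · rfl
  obtain ⟨T, hT⟩ := eventually_atTop.1
    (hf.and (hB.and (hf'.eventually (lt_mem_nhds (half_lt_self hc)))))
  set b := T + 4 * B / c + 1
  have hTb : T ≤ b := by
    have : 0 ≤ B := (abs_nonneg _).trans (hT T le_rfl).2.1
    have : 0 ≤ 4 * B / c := by positivity
    linarith
  have hinc := (convex_Ici T).mul_sub_le_sub_of_hasDerivAt_ge (fun t ht => (hT t ht).1)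
    (fun t ht => (hT t ht).2.2.le) self_mem_Ici hTb hTb
  have h1 := abs_le.1 (hT T le_rfl).2.1
  have h2 := abs_le.1 (hT b hTb).2.1
  have : c / 2 * (b - T) = 2 * B + c / 2 := by simp only [b]; field_simp; ring
  linarith

theorem tendsto_zero_of_lipschitzOnWith_of_hasDerivAt_ge {G G' q : ℝ → ℝ} {a c L : ℝ}
    {K : NNReal} (hq : LipschitzOnWith K q (Ici a)) (hG : ∀ᶠ t in atTop, HasDerivAt G (G' t) t)
    (hGq : ∀ᶠ t in atTop, c * q t ^ 2 ≤ G' t) (hc : 0 < c) (hGL : Tendsto G atTop (𝓝 L)) :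
    Tendsto q atTop (𝓝 0) := by
  rw [Metric.tendsto_atTop]
  intro ε hε
  set δ := ε / (2 * (K + 1))
  have hδ : 0 < δ := by positivity
  have hKδ : K * δ ≤ ε / 2 := by
    rw [show ε / 2 = (K + 1) * δ by simp only [δ]; field_simp]
    nlinarith
  have hshift : Tendsto (fun t => G (t + δ) - G t) atTop (𝓝 0) := by
    simpa using (hGL.comp (tendsto_atTop_add_const_right _ δ tendsto_id)).sub hGL
  obtain ⟨T, hT⟩ := eventually_atTop.1 (hG.and hGq)
  obtain ⟨T', hT'⟩ := eventually_atTop.1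
    (hshift.eventually (gt_mem_nhds (show 0 < c * (ε / 2) ^ 2 * δ by positivity)))
  refine ⟨max (max T T') a, fun t ht => ?_⟩
  simp only [max_le_iff] at ht
  rw [Real.dist_eq, sub_zero]
  by_contra! hqt
  -- `q` stays `ε / 2` away from zero on `[t, t + δ]`, so `G` grows there by a definite amount
  have hlow : ∀ s ∈ Icc t (t + δ), c * (ε / 2) ^ 2 ≤ G' s := by
    intro s hs
    have hlip : |q s - q t| ≤ K * (s - t) := by
      simpa [Real.dist_eq, abs_of_nonneg (sub_nonneg.2 hs.1)] using
        hq.dist_le_mul s (ht.2.trans hs.1) t ht.2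
    have hK : (K : ℝ) * (s - t) ≤ K * δ := by gcongr; linarith [hs.2]
    have hqs : ε / 2 ≤ |q s| := by
      linarith [abs_sub_abs_le_abs_sub (q t) (q s), abs_sub_comm (q s) (q t)]
    have : (ε / 2) ^ 2 ≤ q s ^ 2 := by
      rw [← sq_abs (q s)]; gcongr
    nlinarith [(hT s (ht.1.1.trans hs.1)).2]
  have hgrow := (convex_Icc t (t + δ)).mul_sub_le_sub_of_hasDerivAt_ge
    (fun s hs => (hT s (ht.1.1.trans hs.1)).1) hlow (left_mem_Icc.2 (by linarith))
    (right_mem_Icc.2 (by linarith)) (by linarith)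
  rw [add_sub_cancel_left] at hgrow
  linarith [hT' t ht.1.2]

def lyapunov (p q : ℝ) : ℝ := (1 - p ^ 2 - q ^ 2) * p ^ 2

theorem hasDerivAt_lyapunov {α t : ℝ} {p q : ℝ → ℝ}
    (hp : HasDerivAt p (p t * q t ^ 2 - α * p t * q t) t)
    (hq : HasDerivAt q (q t ^ 3 + α * q t ^ 2 - q t - α + 2 * α * p t ^ 2) t) :
    HasDerivAt (fun s => lyapunov (p s) (q s)) (4 * q t ^ 2 * lyapunov (p t) (q t)) t := by
  unfold lyapunov
  refine ((((hasDerivAt_const t 1).sub (hp.pow 2)).sub (hq.pow 2)).mul (hp.pow 2)).congr_deriv ?_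
  simp only [Pi.sub_apply, Pi.pow_apply]
  ring

theorem lyapunov_pos {x : ℝ × ℝ} (hx : x ∈ Omega) : 0 < lyapunov x.1 x.2 :=
  mul_pos (by linarith [hx.2]) (pow_pos hx.1 2)

theorem lyapunov_le (p q : ℝ) : lyapunov p q ≤ 1 / 4 := by
  unfold lyapunov
  nlinarith [sq_nonneg (p ^ 2 - 1 / 2), sq_nonneg (p * q)]

theorem abs_le_one_of_mem_Omega {x : ℝ × ℝ} (hx : x ∈ Omega) : |x.2| ≤ 1 :=
  sq_le_one_iff_abs_le_one _ |>.1 (by nlinarith [hx.2, sq_nonneg x.1])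

theorem abs_dq_le_of_mem_Omega (α : ℝ) {x : ℝ × ℝ} (hx : x ∈ Omega) :
    |x.2 ^ 3 + α * x.2 ^ 2 - x.2 - α + 2 * α * x.1 ^ 2| ≤ 1 + 2 * |α| := by
  obtain ⟨p, q⟩ := x
  have hq : |q| ≤ 1 := abs_le_one_of_mem_Omega hx
  have hq2 : q ^ 2 ≤ 1 := (sq_le_one_iff_abs_le_one q).2 hq
  have hp2 : p ^ 2 + q ^ 2 < 1 := hx.2
  have h1 : |q * (q ^ 2 - 1)| ≤ 1 := by
    rw [abs_mul]
    refine mul_le_one₀ hq (abs_nonneg _) ?_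
    rw [abs_of_nonpos (by linarith)]
    linarith [sq_nonneg q]
  have h2 : |q ^ 2 - 1 + 2 * p ^ 2| ≤ 2 := abs_le.2 ⟨by nlinarith [sq_nonneg p], by nlinarith⟩
  calc |q ^ 3 + α * q ^ 2 - q - α + 2 * α * p ^ 2|
      = |q * (q ^ 2 - 1) + α * (q ^ 2 - 1 + 2 * p ^ 2)| := by ring_nf
    _ ≤ |q * (q ^ 2 - 1)| + |α| * |q ^ 2 - 1 + 2 * p ^ 2| := by
      rw [← abs_mul]; exact abs_add_le _ _
    _ ≤ 1 + 2 * |α| := by nlinarith [abs_nonneg α]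

section Trajectory

variable {α τ₀ : ℝ} {p q : ℝ → ℝ}

theorem exists_tendsto_lyapunov
    (hp : ∀ τ ∈ Ici τ₀, HasDerivAt p (p τ * (q τ) ^ 2 - α * p τ * q τ) τ)
    (hq : ∀ τ ∈ Ici τ₀,
      HasDerivAt q ((q τ) ^ 3 + α * (q τ) ^ 2 - q τ - α + 2 * α * (p τ) ^ 2) τ)
    (hΩ : ∀ τ ∈ Ici τ₀, (p τ, q τ) ∈ Omega) :
    ∃ L, Tendsto (fun τ => lyapunov (p τ) (q τ)) atTop (𝓝 L) := by
  refine MonotoneOn.exists_tendsto_atTop (a := τ₀) (fun s hs t ht hst => ?_)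
    ⟨1 / 4, forall_mem_image.2 fun τ _ => lyapunov_le _ _⟩
  have := (convex_Ici τ₀).mul_sub_le_sub_of_hasDerivAt_ge
    (fun τ hτ => hasDerivAt_lyapunov (hp τ hτ) (hq τ hτ))
    (fun τ hτ => mul_nonneg (by positivity) (lyapunov_pos (hΩ τ hτ)).le) hs ht hst
  linarith

theorem tendsto_q_zero
    (hp : ∀ τ ∈ Ici τ₀, HasDerivAt p (p τ * (q τ) ^ 2 - α * p τ * q τ) τ)
    (hq : ∀ τ ∈ Ici τ₀,
      HasDerivAt q ((q τ) ^ 3 + α * (q τ) ^ 2 - q τ - α + 2 * α * (p τ) ^ 2) τ)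
    (hΩ : ∀ τ ∈ Ici τ₀, (p τ, q τ) ∈ Omega) :
    Tendsto q atTop (𝓝 0) := by
  obtain ⟨L, hL⟩ := exists_tendsto_lyapunov hp hq hΩ
  have hG := fun τ hτ => hasDerivAt_lyapunov (hp τ hτ) (hq τ hτ)
  have hlip : LipschitzOnWith (⟨1 + 2 * |α|, by positivity⟩ : NNReal) q (Ici τ₀) :=
    (convex_Ici τ₀).lipschitzOnWith_of_nnnorm_hasDerivWithin_le
      (fun τ hτ => (hq τ hτ).hasDerivWithinAt) fun τ hτ =>
        abs_dq_le_of_mem_Omega α (hΩ τ hτ)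
  -- the Lyapunov function only grows, so `G' = 4 q² G ≥ 4 G(τ₀) q²`
  have hgrowth : ∀ τ ∈ Ici τ₀, 4 * lyapunov (p τ₀) (q τ₀) * q τ ^ 2 ≤
      4 * q τ ^ 2 * lyapunov (p τ) (q τ) := by
    intro τ hτ
    have := (convex_Ici τ₀).mul_sub_le_sub_of_hasDerivAt_ge hG
      (fun s hs => mul_nonneg (by positivity) (lyapunov_pos (hΩ s hs)).le) self_mem_Ici hτ hτ
    nlinarith [sq_nonneg (q τ)]
  exact tendsto_zero_of_lipschitzOnWith_of_hasDerivAt_ge hlip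
    (eventually_ge_atTop τ₀ |>.mono hG) (eventually_ge_atTop τ₀ |>.mono hgrowth)
    (by have := lyapunov_pos (hΩ τ₀ self_mem_Ici); positivity) hL

theorem tendsto_p_sq_half (hα : α ≠ 0)
    (hp : ∀ τ ∈ Ici τ₀, HasDerivAt p (p τ * (q τ) ^ 2 - α * p τ * q τ) τ)
    (hq : ∀ τ ∈ Ici τ₀,
      HasDerivAt q ((q τ) ^ 3 + α * (q τ) ^ 2 - q τ - α + 2 * α * (p τ) ^ 2) τ)
    (hΩ : ∀ τ ∈ Ici τ₀, (p τ, q τ) ∈ Omega) :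
    Tendsto (fun τ => p τ ^ 2) atTop (𝓝 (1 / 2)) := by
  obtain ⟨L, hL⟩ := exists_tendsto_lyapunov hp hq hΩ
  have hq0 := tendsto_q_zero hp hq hΩ
  have hpq : Tendsto (fun τ => p τ ^ 2 * q τ ^ 2) atTop (𝓝 0) := by
    refine squeeze_zero' (Eventually.of_forall fun τ => by positivity)
      (eventually_ge_atTop τ₀ |>.mono fun τ hτ => ?_) (by simpa using hq0.pow 2)
    nlinarith [(hΩ τ hτ).2, sq_nonneg (p τ), sq_nonneg (q τ)]
  -- `(p² - 1/2)² = 1/4 - G - p² q²` converges, hence so does `|p² - 1/2|`, and by continuity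
  -- `p² - 1/2` itself
  have habs : Tendsto (fun τ => |p τ ^ 2 - 1 / 2|) atTop (𝓝 √(1 / 4 - L - 0)) := by
    refine ((tendsto_const_nhds.sub hL).sub hpq).sqrt.congr fun τ => ?_
    rw [← Real.sqrt_sq_eq_abs]
    unfold lyapunov
    ring_nf
  obtain ⟨c, hc⟩ := exists_tendsto_of_tendsto_abs (f := fun τ => p τ ^ 2 - 1 / 2)
    (eventually_ge_atTop τ₀ |>.mono fun τ hτ =>
      ((hp τ hτ).differentiableAt.pow 2 |>.sub_const _).continuousAt) habs
  -- `q' = (q³ + α q² - q) + 2α (p² - 1/2) → 2αc`, which must vanish since `q` is bounded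
  have hq' : Tendsto (fun τ => q τ ^ 3 + α * q τ ^ 2 - q τ - α + 2 * α * p τ ^ 2) atTop
      (𝓝 (0 ^ 3 + α * 0 ^ 2 - 0 + 2 * α * c)) :=
    (((hq0.pow 3).add ((hq0.pow 2).const_mul α)).sub hq0 |>.add (hc.const_mul (2 * α))).congr
      fun τ => by ring
  have h2αc := eq_zero_of_tendsto_deriv_of_bounded (eventually_ge_atTop τ₀ |>.mono hq) hq'
    (eventually_ge_atTop τ₀ |>.mono fun τ hτ => abs_le_one_of_mem_Omega (hΩ τ hτ))
  obtain rfl : c = 0 := by simpa [hα] using h2αc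
  exact (zero_add (1 / 2 : ℝ) ▸ hc.add_const (1 / 2)).congr fun τ => sub_add_cancel _ _

end Trajectory

/-- Every solution of the planar system on `[τ₀, ∞)` lying in `Ω` tends to the
de Sitter equilibrium `(1/√2, 0)` as `τ → ∞`: it is a global attractor for all
physical trajectories. -/
theorem stmt8 (α : ℝ) (hα : 0 < α) (τ₀ : ℝ) (p q : ℝ → ℝ)
    (hp : ∀ τ ∈ Set.Ici τ₀, HasDerivAt p (p τ * (q τ) ^ 2 - α * p τ * q τ) τ)
    (hq : ∀ τ ∈ Set.Ici τ₀,
      HasDerivAt q ((q τ) ^ 3 + α * (q τ) ^ 2 - q τ - α + 2 * α * (p τ) ^ 2) τ)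
    (hΩ : ∀ τ ∈ Set.Ici τ₀, (p τ, q τ) ∈ Omega) :
    Filter.Tendsto (fun τ => (p τ, q τ)) Filter.atTop
      (nhds ((1 / Real.sqrt 2, 0) : ℝ × ℝ)) := by
  have hp2 := tendsto_p_sq_half hα.ne' hp hq hΩ
  have hp' : Tendsto p atTop (𝓝 (1 / √2)) := by
    rw [one_div, ← Real.sqrt_inv, ← one_div]
    refine hp2.sqrt.congr' (eventually_ge_atTop τ₀ |>.mono fun τ hτ => ?_)
    exact Real.sqrt_sq (hΩ τ hτ).1.le
  exact hp'.prodMk_nhds (tendsto_q_zero hp hq hΩ)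
end

section
/- Let (p,q) be a solution of the planar system on (−∞, τ₀] with (p(τ), q(τ)) ∈ Ω for all τ ≤ τ₀, and suppose (p,q) is not identically equal to the equilibrium (1/√2, 0). Then H(p(τ), q(τ)) → 0 as τ → −∞; in particular the past-limit set of every non-stationary physical trajectory lies on the boundary ∂Ω of the phase space. -/
open Filter Set Topology

theorem MonotoneOn.exists_tendsto_atBot {α β : Type*} [LinearOrder α]
    [ConditionallyCompleteLinearOrder β] [TopologicalSpace β] [OrderTopology β]
    {f : α → β} {a : α} (hf : MonotoneOn f (Iic a)) (hbdd : BddBelow (f '' Iic a)) :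
    ∃ L, Tendsto f atBot (𝓝 L) ∧ ∀ x ∈ Iic a, L ≤ f x := by
  set g : α → β := fun x => f (min x a)
  have hg : Monotone g := fun x y hxy =>
    hf (min_le_right x a) (min_le_right y a) (min_le_min_right a hxy)
  obtain ⟨m, hm⟩ := hbdd
  have hgbdd : BddBelow (range g) :=
    ⟨m, by rintro _ ⟨x, rfl⟩; exact hm (mem_image_of_mem f (min_le_right x a))⟩
  refine ⟨⨅ x, g x, (tendsto_atBot_ciInf hg hgbdd).congr' ?_, fun x hx => ?_⟩
  · filter_upwards [eventually_le_atBot a] with x hx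
    simp only [g, min_eq_left hx]
  · simpa only [g, min_eq_left (mem_Iic.mp hx)] using ciInf_le hgbdd x

/-- Barbalat's lemma at `-∞`. -/
theorem tendsto_atBot_zero_of_hasDerivAt_of_uniformContinuousOn {a c : ℝ} {f g : ℝ → ℝ}
    (hf : ∀ x ∈ Iic a, HasDerivAt f (g x) x) (hlim : Tendsto f atBot (𝓝 c))
    (hg : UniformContinuousOn g (Iic a)) : Tendsto g atBot (𝓝 0) := by
  rw [Metric.tendsto_nhds]
  intro ε hε
  obtain ⟨δ, hδ, hgδ⟩ := Metric.uniformContinuousOn_iff.mp hg (ε / 2) (half_pos hε)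
  obtain ⟨A, hA⟩ :=
    eventually_atBot.mp (Metric.tendsto_nhds.mp hlim (ε * δ / 4) (by positivity))
  refine eventually_atBot.mpr ⟨min a A, fun t ht => ?_⟩
  rw [Real.dist_0_eq_abs]
  by_contra! hgt
  have hta : t ≤ a := ht.trans (min_le_left a A)
  have htA : t ≤ A := ht.trans (min_le_right a A)
  obtain ⟨ξ, hξ, hslope⟩ := exists_hasDerivAt_eq_slope f g (sub_lt_self t hδ)
    (fun x hx => (hf x (hx.2.trans hta)).continuousAt.continuousWithinAt)
    (fun x hx => hf x (hx.2.le.trans hta))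
  have hgξ : ε / 2 < |g ξ| := by
    have hξt : dist ξ t < δ := by
      rw [Real.dist_eq, abs_lt]; constructor <;> linarith [hξ.1, hξ.2]
    have := hgδ ξ (hξ.2.le.trans hta) t hta hξt
    rw [Real.dist_eq] at this
    linarith [abs_sub_abs_le_abs_sub (g t) (g ξ), abs_sub_comm (g ξ) (g t)]
  have hfξ : |f t - f (t - δ)| = |g ξ| * δ := by
    rw [hslope, sub_sub_cancel, abs_div, abs_of_pos hδ, div_mul_cancel₀ _ hδ.ne']
  have hfA : |f t - f (t - δ)| < ε * δ / 2 := by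
    have h1 := hA t htA
    have h2 := hA (t - δ) (by linarith)
    rw [Real.dist_eq, abs_lt] at h1 h2
    rw [abs_lt]
    constructor <;> linarith
  nlinarith

theorem uniformContinuousOn_comp_of_hasDerivAt_mapsTo_isCompact {E F : Type*}
    [NormedAddCommGroup E] [NormedSpace ℝ E] [UniformSpace F] {v : E → E} {Φ : E → F}
    {γ : ℝ → E} {s : Set ℝ} {K : Set E} (hs : Convex ℝ s) (hK : IsCompact K)
    (hv : ContinuousOn v K) (hΦ : ContinuousOn Φ K) (hγ : ∀ t ∈ s, HasDerivAt γ (v (γ t)) t)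
    (hγK : MapsTo γ s K) : UniformContinuousOn (Φ ∘ γ) s := by
  obtain ⟨C, hC⟩ := hK.exists_bound_of_continuousOn hv
  have hlip : LipschitzOnWith C.toNNReal γ s :=
    hs.lipschitzOnWith_of_nnnorm_hasDerivWithin_le (fun t ht => (hγ t ht).hasDerivWithinAt)
      fun t ht => by
        rw [← NNReal.coe_le_coe, coe_nnnorm]
        exact (hC _ (hγK ht)).trans (Real.le_coe_toNNReal C)
  exact (hK.uniformContinuousOn_of_continuous hΦ).comp hlip.uniformContinuousOn hγK

def vectorField (α : ℝ) (x : ℝ × ℝ) : ℝ × ℝ :=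
  (x.1 * x.2 ^ 2 - α * x.1 * x.2, x.2 ^ 3 + α * x.2 ^ 2 - x.2 - α + 2 * α * x.1 ^ 2)

theorem continuous_vectorField (α : ℝ) : Continuous (vectorField α) := by
  unfold vectorField; fun_prop

theorem Omega_subset_closedBall : Omega ⊆ Metric.closedBall 0 1 := by
  rintro x ⟨-, hx⟩
  rw [mem_closedBall_zero_iff, Prod.norm_def, Real.norm_eq_abs, Real.norm_eq_abs, max_le_iff,
    abs_le, abs_le]
  refine ⟨⟨?_, ?_⟩, ?_, ?_⟩ <;> nlinarith [sq_nonneg x.1, sq_nonneg x.2]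

theorem H_pos_of_mem_Omega {x : ℝ × ℝ} (hx : x ∈ Omega) : 0 < H x.1 x.2 :=
  mul_pos (pow_pos hx.1 2) (by linarith [hx.2])

theorem H_le_quarter (p q : ℝ) : H p q ≤ 1 / 4 := by
  unfold H
  nlinarith [sq_nonneg (2 * p ^ 2 - 1), mul_nonneg (sq_nonneg p) (sq_nonneg q)]

theorem eq_equilibrium_of_H_eq_quarter {p q : ℝ} (hp : 0 < p) (hH : H p q = 1 / 4) :
    (p, q) = (1 / Real.sqrt 2, 0) := by
  unfold H at hH
  have hq : q = 0 := by
    nlinarith [sq_nonneg (2 * p ^ 2 - 1), sq_nonneg q, mul_nonneg (sq_nonneg p) (sq_nonneg q)]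
  have hp2 : p ^ 2 = 1 / 2 := by subst hq; nlinarith [sq_nonneg (2 * p ^ 2 - 1)]
  rw [hq, one_div, ← Real.sqrt_inv, ← one_div, ← hp2, Real.sqrt_sq hp.le]

theorem hasDerivAt_H {α τ : ℝ} {p q : ℝ → ℝ}
    (hp : HasDerivAt p (p τ * q τ ^ 2 - α * p τ * q τ) τ)
    (hq : HasDerivAt q (q τ ^ 3 + α * q τ ^ 2 - q τ - α + 2 * α * p τ ^ 2) τ) :
    HasDerivAt (fun t => H (p t) (q t)) (4 * q τ ^ 2 * H (p τ) (q τ)) τ := by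
  refine ((hp.fun_pow 2).fun_mul
    (((hp.fun_pow 2).const_sub 1).fun_sub (hq.fun_pow 2))).congr_deriv ?_
  simp only [H]
  ring

theorem tendsto_H_atBot_quarter_of_tendsto_pos {α τ₀ L : ℝ} {p q : ℝ → ℝ} (hα : 0 < α)
    (hp : ∀ τ ∈ Iic τ₀, HasDerivAt p (p τ * q τ ^ 2 - α * p τ * q τ) τ)
    (hq : ∀ τ ∈ Iic τ₀,
      HasDerivAt q (q τ ^ 3 + α * q τ ^ 2 - q τ - α + 2 * α * p τ ^ 2) τ)
    (hΩ : ∀ τ ∈ Iic τ₀, (p τ, q τ) ∈ Omega) (hL : 0 < L)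
    (hH : Tendsto (fun τ => H (p τ) (q τ)) atBot (𝓝 L)) :
    Tendsto (fun τ => H (p τ) (q τ)) atBot (𝓝 (1 / 4)) := by
  have huc : ∀ Φ : ℝ × ℝ → ℝ, Continuous Φ →
      UniformContinuousOn (fun τ => Φ (p τ, q τ)) (Iic τ₀) := fun Φ hΦ =>
    uniformContinuousOn_comp_of_hasDerivAt_mapsTo_isCompact (convex_Iic τ₀)
      (isCompact_closedBall 0 1) (continuous_vectorField α).continuousOn hΦ.continuousOn
      (fun τ hτ => (hp τ hτ).prodMk (hq τ hτ)) fun τ hτ => Omega_subset_closedBall (hΩ τ hτ)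
  have hlog : ∀ τ ∈ Iic τ₀, HasDerivAt (fun t => Real.log (H (p t) (q t))) (4 * q τ ^ 2) τ :=
    fun τ hτ => by
      have hHpos := H_pos_of_mem_Omega (hΩ τ hτ)
      exact ((hasDerivAt_H (hp τ hτ) (hq τ hτ)).log hHpos.ne').congr_deriv
        (mul_div_cancel_right₀ _ hHpos.ne')
  have hq2 : Tendsto (fun τ => 4 * q τ ^ 2) atBot (𝓝 0) :=
    tendsto_atBot_zero_of_hasDerivAt_of_uniformContinuousOn hlog (hH.log hL.ne')
      (huc (fun x => 4 * x.2 ^ 2) (by fun_prop))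
  have hq0 : Tendsto q atBot (𝓝 0) := by
    rw [tendsto_zero_iff_abs_tendsto_zero]
    simpa [Function.comp_def, Real.sqrt_sq_eq_abs] using (hq2.div_const 4).sqrt
  have hdq :
      Tendsto (fun τ => q τ ^ 3 + α * q τ ^ 2 - q τ - α + 2 * α * p τ ^ 2) atBot (𝓝 0) :=
    tendsto_atBot_zero_of_hasDerivAt_of_uniformContinuousOn hq hq0
      (huc (fun x => (vectorField α x).2) (continuous_snd.comp (continuous_vectorField α)))
  have hp2 : Tendsto (fun τ => p τ ^ 2) atBot (𝓝 (1 / 2)) := by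
    -- solve the `q`-equation for `p²`; this is where `α ≠ 0` enters
    have := ((hdq.sub (((hq0.pow 3).add ((hq0.pow 2).const_mul α)).sub hq0)).add_const α).div_const
      (2 * α)
    convert this using 2 with τ
    · field_simp; ring
    · field_simp; ring
  convert hp2.mul ((hp2.const_sub 1).sub (hq0.pow 2)) using 2
  · rfl
  · norm_num

/-- For a physical solution on `(−∞, τ₀]` which is not identically the equilibrium
`(1/√2, 0)`, one has `H(p(τ), q(τ)) → 0` as `τ → −∞`: the past-limit set of every
non-stationary physical trajectory lies on the boundary `∂Ω`. -/
theorem stmt9 (α : ℝ) (hα : 0 < α) (τ₀ : ℝ) (p q : ℝ → ℝ)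
    (hp : ∀ τ ∈ Set.Iic τ₀, HasDerivAt p (p τ * (q τ) ^ 2 - α * p τ * q τ) τ)
    (hq : ∀ τ ∈ Set.Iic τ₀,
      HasDerivAt q ((q τ) ^ 3 + α * (q τ) ^ 2 - q τ - α + 2 * α * (p τ) ^ 2) τ)
    (hΩ : ∀ τ ∈ Set.Iic τ₀, (p τ, q τ) ∈ Omega)
    (hne : ¬ ∀ τ ∈ Set.Iic τ₀, (p τ, q τ) = ((1 / Real.sqrt 2, 0) : ℝ × ℝ)) :
    Filter.Tendsto (fun τ => H (p τ) (q τ)) Filter.atBot (nhds 0) := by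
  have hpos : ∀ τ ∈ Iic τ₀, 0 < H (p τ) (q τ) := fun τ hτ => H_pos_of_mem_Omega (hΩ τ hτ)
  have hmono : MonotoneOn (fun τ => H (p τ) (q τ)) (Iic τ₀) :=
    monotoneOn_of_hasDerivWithinAt_nonneg (convex_Iic τ₀)
      (fun τ hτ => (hasDerivAt_H (hp τ hτ) (hq τ hτ)).continuousAt.continuousWithinAt)
      (fun τ hτ => (hasDerivAt_H (hp τ (interior_subset hτ))
        (hq τ (interior_subset hτ))).hasDerivWithinAt)
      fun τ hτ => mul_nonneg (by positivity) (hpos τ (interior_subset hτ)).le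
  obtain ⟨L, hL, hLH⟩ :=
    hmono.exists_tendsto_atBot ⟨0, by rintro _ ⟨τ, hτ, rfl⟩; exact (hpos τ hτ).le⟩
  obtain rfl | hL0 :=
    (ge_of_tendsto hL (eventually_atBot.mpr ⟨τ₀, fun τ hτ => (hpos τ hτ).le⟩)).eq_or_lt
  · exact hL
  refine absurd (fun τ hτ =>
    eq_equilibrium_of_H_eq_quarter (hΩ τ hτ).1 (le_antisymm (H_le_quarter _ _) ?_)) hne
  rw [← tendsto_nhds_unique hL (tendsto_H_atBot_quarter_of_tendsto_pos hα hp hq hΩ hL0 hL)]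
  exact hLH τ hτ
end

section
/- Assume α > 1. (a) If a solution (p,q) of the planar system on an interval I satisfies p(τ) > 0 and p(τ)² + q(τ)² = 1 for all τ ∈ I, then q'(τ) = (q(τ) − α)(q(τ)² − 1) > 0 for all τ ∈ I, so q is strictly increasing on I. (b) If a solution satisfies p(τ) = 0 and −1 < q(τ) < 1 for all τ ∈ I, then q'(τ) = (q(τ) + α)(q(τ)² − 1) < 0 for all τ ∈ I, so q is strictly decreasing on I. (Thus for α > 1 the boundary of the phase space is a heteroclinic cycle joining (0,−1) to (0,1) along the circle arc and (0,1) to (0,−1) along the q-axis.) -/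
/-! On the unit circle `p² = 1 - q²`, so the `q`-component of the vector field factors as
`(q - α)(q² - 1)`; on the axis `p = 0` it factors as `(q + α)(q² - 1)`. For `α > 1` and `|q| < 1`
the first is positive and the second negative, and the sign of the derivative on an interval
gives strict monotonicity. -/

lemma strictMonoOn_of_hasDerivAt_pos {I : Set ℝ} (hI : I.OrdConnected) {f f' : ℝ → ℝ}
    (hf : ∀ x ∈ I, HasDerivAt f (f' x) x) (hf' : ∀ x ∈ I, 0 < f' x) : StrictMonoOn f I :=
  strictMonoOn_of_hasDerivWithinAt_pos hI.convex
    (fun x hx ↦ (hf x hx).continuousAt.continuousWithinAt)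
    (fun x hx ↦ (hf x (interior_subset hx)).hasDerivWithinAt)
    (fun x hx ↦ hf' x (interior_subset hx))

lemma strictAntiOn_of_hasDerivAt_neg {I : Set ℝ} (hI : I.OrdConnected) {f f' : ℝ → ℝ}
    (hf : ∀ x ∈ I, HasDerivAt f (f' x) x) (hf' : ∀ x ∈ I, f' x < 0) : StrictAntiOn f I :=
  strictAntiOn_of_hasDerivWithinAt_neg hI.convex
    (fun x hx ↦ (hf x hx).continuousAt.continuousWithinAt)
    (fun x hx ↦ (hf x (interior_subset hx)).hasDerivWithinAt)
    (fun x hx ↦ hf' x (interior_subset hx))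

section VectorField

variable {α p q : ℝ}

lemma field_eq_of_sq_add_sq_eq_one (h : p ^ 2 + q ^ 2 = 1) :
    q ^ 3 + α * q ^ 2 - q - α + 2 * α * p ^ 2 = (q - α) * (q ^ 2 - 1) := by
  linear_combination 2 * α * h

lemma field_eq_of_eq_zero (hp : p = 0) :
    q ^ 3 + α * q ^ 2 - q - α + 2 * α * p ^ 2 = (q + α) * (q ^ 2 - 1) := by
  subst hp
  ring

lemma circle_field_pos (hα : 1 < α) (hp : 0 < p) (h : p ^ 2 + q ^ 2 = 1) :
    0 < (q - α) * (q ^ 2 - 1) := by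
  have hq2 : q ^ 2 < 1 := by nlinarith
  have hq : q < 1 := by nlinarith
  exact mul_pos_of_neg_of_neg (by linarith) (by linarith)

lemma axis_field_neg (hα : 1 < α) (hq₀ : -1 < q) (hq₁ : q < 1) :
    (q + α) * (q ^ 2 - 1) < 0 :=
  mul_neg_of_pos_of_neg (by linarith) (by nlinarith)

end VectorField

/-- Assume `α > 1`.
(a) If a solution `(p,q)` of the planar system on an interval `I` satisfies `p(τ) > 0` and
`p(τ)² + q(τ)² = 1` for all `τ ∈ I`, then `q'(τ) = (q(τ) − α)(q(τ)² − 1) > 0` on `I`,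
so `q` is strictly increasing on `I`.
(b) If a solution satisfies `p(τ) = 0` and `−1 < q(τ) < 1` for all `τ ∈ I`, then
`q'(τ) = (q(τ) + α)(q(τ)² − 1) < 0` on `I`, so `q` is strictly decreasing on `I`. -/
theorem stmt11 (α : ℝ) (hα : 1 < α) :
    (∀ (I : Set ℝ), I.OrdConnected → ∀ p q : ℝ → ℝ,
      (∀ τ ∈ I, HasDerivAt p (p τ * (q τ) ^ 2 - α * p τ * q τ) τ) →
      (∀ τ ∈ I,
        HasDerivAt q ((q τ) ^ 3 + α * (q τ) ^ 2 - q τ - α + 2 * α * (p τ) ^ 2) τ) →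
      (∀ τ ∈ I, 0 < p τ ∧ (p τ) ^ 2 + (q τ) ^ 2 = 1) →
      (∀ τ ∈ I,
        (q τ) ^ 3 + α * (q τ) ^ 2 - q τ - α + 2 * α * (p τ) ^ 2
          = (q τ - α) * ((q τ) ^ 2 - 1) ∧
        0 < (q τ - α) * ((q τ) ^ 2 - 1)) ∧
      StrictMonoOn q I) ∧
    (∀ (I : Set ℝ), I.OrdConnected → ∀ p q : ℝ → ℝ,
      (∀ τ ∈ I, HasDerivAt p (p τ * (q τ) ^ 2 - α * p τ * q τ) τ) →
      (∀ τ ∈ I,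
        HasDerivAt q ((q τ) ^ 3 + α * (q τ) ^ 2 - q τ - α + 2 * α * (p τ) ^ 2) τ) →
      (∀ τ ∈ I, p τ = 0 ∧ -1 < q τ ∧ q τ < 1) →
      (∀ τ ∈ I,
        (q τ) ^ 3 + α * (q τ) ^ 2 - q τ - α + 2 * α * (p τ) ^ 2
          = (q τ + α) * ((q τ) ^ 2 - 1) ∧
        (q τ + α) * ((q τ) ^ 2 - 1) < 0) ∧
      StrictAntiOn q I) := by
  constructor
  · intro I hI p q _ hq hcircle
    have hfield := fun τ (hτ : τ ∈ I) ↦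
      And.intro (field_eq_of_sq_add_sq_eq_one (α := α) (hcircle τ hτ).2)
        (circle_field_pos hα (hcircle τ hτ).1 (hcircle τ hτ).2)
    exact ⟨hfield, strictMonoOn_of_hasDerivAt_pos hI (fun τ hτ ↦ (hfield τ hτ).1 ▸ hq τ hτ)
      (fun τ hτ ↦ (hfield τ hτ).2)⟩
  · intro I hI p q _ hq haxis
    have hfield := fun τ (hτ : τ ∈ I) ↦
      And.intro (field_eq_of_eq_zero (α := α) (q := q τ) (haxis τ hτ).1)
        (axis_field_neg hα (haxis τ hτ).2.1 (haxis τ hτ).2.2)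
    exact ⟨hfield, strictAntiOn_of_hasDerivAt_neg hI (fun τ hτ ↦ (hfield τ hτ).1 ▸ hq τ hτ)
      (fun τ hτ ↦ (hfield τ hτ).2)⟩
end

section
/- Assume α > 1. Let (p,q) be a solution of the planar system on (−∞, τ₀] with (p(τ), q(τ)) ∈ Ω for all τ ≤ τ₀, not identically equal to the equilibrium (1/√2, 0). Then exp(−4τ) · H(p(τ), q(τ)) → ∞ as τ → −∞; that is, H tends to zero strictly more slowly than exp(4τ) in the approach to the initial singularity. -/
open Filter Set Real Topology
open scoped NNReal

theorem Convex.image_sub_le_mul_sub_of_hasDerivAt_le {D : Set ℝ} (hD : Convex ℝ D)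
    {f f' : ℝ → ℝ} (hf : ∀ x ∈ D, HasDerivAt f (f' x) x) {C : ℝ} (hC : ∀ x ∈ D, f' x ≤ C)
    {x y : ℝ} (hx : x ∈ D) (hy : y ∈ D) (hxy : x ≤ y) : f y - f x ≤ C * (y - x) :=
  hD.image_sub_le_mul_sub_of_deriv_le (fun z hz => (hf z hz).continuousAt.continuousWithinAt)
    (fun z hz => (hf z (interior_subset hz)).differentiableAt.differentiableWithinAt)
    (fun z hz => (hf z (interior_subset hz)).deriv ▸ hC z (interior_subset hz)) x hx y hy hxy

theorem exists_lt_of_forall_exists_le_add {φ : ℝ → ℝ} {a D : ℝ} (hD : 0 < D)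
    (h : ∀ t ≤ a, ∃ s ≤ t, φ t + D ≤ φ s) (B : ℝ) : ∃ t ≤ a, B < φ t := by
  have climb : ∀ n : ℕ, ∃ t ≤ a, φ a + n * D ≤ φ t := by
    intro n
    induction n with
    | zero => exact ⟨a, le_rfl, by simp⟩
    | succ n ih =>
      obtain ⟨t, hta, ht⟩ := ih
      obtain ⟨s, hst, hs⟩ := h t hta
      exact ⟨s, hst.trans hta, by push_cast; linarith⟩
  obtain ⟨n, hn⟩ := exists_nat_gt ((B - φ a) / D)
  obtain ⟨t, hta, ht⟩ := climb n
  rw [div_lt_iff₀ hD] at hn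
  exact ⟨t, hta, by linarith⟩

theorem tendsto_atBot_atTop_of_antitoneOn_Iic {f : ℝ → ℝ} {a : ℝ} (hf : AntitoneOn f (Iic a))
    (h : ∀ B, ∃ t ≤ a, B < f t) : Tendsto f atBot atTop := by
  refine tendsto_atTop.2 fun B => ?_
  obtain ⟨t, hta, ht⟩ := h B
  filter_upwards [eventually_le_atBot t] with τ hτ
  exact ht.le.trans (hf (hτ.trans hta) hta hτ)

theorem tendsto_atBot_atBot_of_hasDerivAt {f f' : ℝ → ℝ} {L : ℝ}
    (hf : ∀ᶠ τ in atBot, HasDerivAt f (f' τ) τ) (hf' : Tendsto f' atBot (𝓝 L)) (hL : 0 < L) :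
    Tendsto f atBot atBot := by
  obtain ⟨T, hT⟩ :=
    eventually_atBot.1 (hf.and (hf'.eventually (lt_mem_nhds (half_lt_self hL))))
  have hlin : ∀ τ ≤ T, f τ ≤ L / 2 * τ + (f T - L / 2 * T) := by
    intro τ hτ
    have := (convex_Iic T).image_sub_le_mul_sub_of_hasDerivAt_le (f := fun t => -f t)
      (fun x hx => (hT x hx).1.neg) (C := -(L / 2)) (fun x hx => by linarith [(hT x hx).2])
      hτ (mem_Iic.2 le_rfl) hτ
    linarith
  refine tendsto_atBot_mono' _ (eventually_atBot.2 ⟨T, hlin⟩) ?_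
  exact tendsto_atBot_add_const_right _ _ (tendsto_id.const_mul_atBot (half_pos hL))

theorem tendsto_zero_of_hasDerivAt_le_neg_of_lipschitzOnWith {φ φ' g : ℝ → ℝ} {a B : ℝ}
    {K : ℝ≥0} (hφ : ∀ τ ≤ a, HasDerivAt φ (φ' τ) τ) (hφg : ∀ τ ≤ a, φ' τ ≤ -g τ)
    (hg : ∀ τ ≤ a, 0 ≤ g τ) (hgK : LipschitzOnWith K g (Iic a)) (hB : ∀ τ ≤ a, φ τ ≤ B) :
    Tendsto g atBot (𝓝 0) := by
  refine tendsto_order.2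
    ⟨fun b hb => eventually_atBot.2 ⟨a, fun τ hτ => hb.trans_le (hg τ hτ)⟩, fun δ hδ => ?_⟩
  by_contra hfreq
  rw [not_eventually, frequently_atBot] at hfreq
  set w := δ / (2 * (K + 1))
  have hw : 0 < w := by positivity
  have hKw : K * w ≤ δ / 2 := by
    rw [mul_div_assoc', div_le_div_iff₀ (by positivity) two_pos]
    nlinarith [K.2]
  -- where `g s ≥ δ`, the Lipschitz bound keeps `g ≥ δ / 2` on `[s - w, s]`
  have bump : ∀ s ≤ a, δ ≤ g s → φ s + δ / 2 * w ≤ φ (s - w) := by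
    intro s hs hδs
    have hsub : Icc (s - w) s ⊆ Iic a := fun x hx => hx.2.trans hs
    have hlow : ∀ x ∈ Icc (s - w) s, δ / 2 ≤ g x := by
      intro x hx
      have hdist := hgK.dist_le_mul x (hsub hx) s hs
      rw [Real.dist_eq, Real.dist_eq] at hdist
      have hxs : |x - s| ≤ w := abs_le.2 ⟨by linarith [hx.1], by linarith [hx.2]⟩
      linarith [neg_abs_le (g x - g s), mul_le_mul_of_nonneg_left hxs K.coe_nonneg]
    have := (convex_Icc (s - w) s).image_sub_le_mul_sub_of_hasDerivAt_le
      (fun x hx => hφ x (hsub hx)) (C := -(δ / 2))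
      (fun x hx => (hφg x (hsub hx)).trans (neg_le_neg (hlow x hx)))
      ⟨le_rfl, by linarith⟩ ⟨by linarith, le_rfl⟩ (by linarith)
    linarith
  have hanti : ∀ s ≤ a, ∀ t ≤ a, s ≤ t → φ t ≤ φ s := fun s hs t ht hst => by
    have := (convex_Iic a).image_sub_le_mul_sub_of_hasDerivAt_le hφ (C := 0)
      (fun x hx => (hφg x hx).trans (neg_nonpos.2 (hg x hx))) hs ht hst
    linarith
  have climb : ∀ t ≤ a, ∃ s ≤ t, φ t + δ / 2 * w ≤ φ s := fun t ht => by
    obtain ⟨s, hst, hs⟩ := hfreq t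
    refine ⟨s - w, by linarith, ?_⟩
    linarith [bump s (hst.trans ht) (not_lt.1 hs), hanti s (hst.trans ht) t ht hst]
  obtain ⟨t, hta, ht⟩ := exists_lt_of_forall_exists_le_add (by positivity) climb B
  linarith [hB t hta]

theorem tendsto_or_tendsto_neg_of_tendsto_sq {f : ℝ → ℝ} {a : ℝ} (hf : ContinuousOn f (Iic a))
    (h : Tendsto (fun τ => f τ ^ 2) atBot (𝓝 1)) :
    Tendsto f atBot (𝓝 1) ∨ Tendsto f atBot (𝓝 (-1)) := by
  obtain ⟨T, hT⟩ := eventually_atBot.1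
    ((h.eventually (lt_mem_nhds one_pos)).and (eventually_le_atBot a))
  have habs : Tendsto (fun τ => |f τ|) atBot (𝓝 1) := by
    simpa [Real.sqrt_sq_eq_abs] using h.sqrt
  have hfT : ContinuousOn f (Iic T) := hf.mono fun τ hτ => (hT τ hτ).2
  rcases isPreconnected_Iic.eq_or_eq_neg_of_sq_eq hfT hfT.abs (fun τ _ => (sq_abs (f τ)).symm)
    (fun {τ} hτ => abs_ne_zero.2 fun h0 => by simpa [h0] using (hT τ hτ).1) with h | h
  · exact .inl (habs.congr' (eventually_atBot.2 ⟨T, fun τ hτ => (h hτ).symm⟩))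
  · have := habs.neg.congr' (eventually_atBot.2 ⟨T, fun τ hτ => (h hτ).symm⟩)
    exact .inr (by simpa using this)

structure IsOmegaSolution (α τ₀ : ℝ) (p q : ℝ → ℝ) : Prop where
  hasDerivAt_p : ∀ τ ≤ τ₀, HasDerivAt p (p τ * (q τ) ^ 2 - α * p τ * q τ) τ
  hasDerivAt_q : ∀ τ ≤ τ₀,
    HasDerivAt q ((q τ) ^ 3 + α * (q τ) ^ 2 - q τ - α + 2 * α * (p τ) ^ 2) τ
  mem_omega : ∀ τ ≤ τ₀, (p τ, q τ) ∈ Omega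

theorem H_le_sq (p q : ℝ) : H p q ≤ p ^ 2 := by
  unfold H
  nlinarith [sq_nonneg p, sq_nonneg q]

noncomputable def logScaledH (p q : ℝ → ℝ) (τ : ℝ) : ℝ := Real.log (H (p τ) (q τ)) - 4 * τ

namespace IsOmegaSolution

variable {α τ₀ τ : ℝ} {p q : ℝ → ℝ}

theorem pos (hs : IsOmegaSolution α τ₀ p q) (hτ : τ ≤ τ₀) : 0 < p τ := (hs.mem_omega τ hτ).1

theorem sq_add_sq_lt_one (hs : IsOmegaSolution α τ₀ p q) (hτ : τ ≤ τ₀) :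
    p τ ^ 2 + q τ ^ 2 < 1 :=
  (hs.mem_omega τ hτ).2

theorem H_pos (hs : IsOmegaSolution α τ₀ p q) (hτ : τ ≤ τ₀) : 0 < H (p τ) (q τ) :=
  mul_pos (pow_pos (hs.pos hτ) 2) (by linarith [hs.sq_add_sq_lt_one hτ])

theorem continuousOn_q (hs : IsOmegaSolution α τ₀ p q) : ContinuousOn q (Iic τ₀) :=
  fun τ hτ => (hs.hasDerivAt_q τ hτ).continuousAt.continuousWithinAt

theorem hasDerivAt_log_p (hs : IsOmegaSolution α τ₀ p q) (hτ : τ ≤ τ₀) :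
    HasDerivAt (fun t => Real.log (p t)) (q τ ^ 2 - α * q τ) τ := by
  convert (hs.hasDerivAt_p τ hτ).log (hs.pos hτ).ne' using 1
  field_simp [(hs.pos hτ).ne']

theorem hasDerivAt_logScaledH (hs : IsOmegaSolution α τ₀ p q) (hτ : τ ≤ τ₀) :
    HasDerivAt (logScaledH p q) (-(4 * (1 - q τ ^ 2))) τ := by
  have hp := hs.hasDerivAt_p τ hτ
  have hq := hs.hasDerivAt_q τ hτ
  have hH : HasDerivAt (fun t => H (p t) (q t)) (4 * q τ ^ 2 * H (p τ) (q τ)) τ := by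
    simp only [H]
    refine ((hp.pow 2).mul
      (((hasDerivAt_const τ (1 : ℝ)).sub (hp.pow 2)).sub (hq.pow 2))).congr_deriv ?_
    simp only [Pi.pow_apply, Pi.sub_apply]
    push_cast
    ring
  have hlin : HasDerivAt (fun t : ℝ => 4 * t) 4 τ := by
    simpa using (hasDerivAt_id τ).const_mul (4 : ℝ)
  refine ((hH.log (hs.H_pos hτ).ne').sub hlin).congr_deriv ?_
  field_simp [(hs.H_pos hτ).ne']
  ring

theorem antitoneOn_logScaledH (hs : IsOmegaSolution α τ₀ p q) :
    AntitoneOn (logScaledH p q) (Iic τ₀) := fun s hs' t ht hst => by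
  have := (convex_Iic τ₀).image_sub_le_mul_sub_of_hasDerivAt_le
    (fun x hx => hs.hasDerivAt_logScaledH hx) (C := 0)
    (fun x hx => by nlinarith [hs.sq_add_sq_lt_one hx, sq_nonneg (p x)]) hs' ht hst
  linarith

theorem exp_logScaledH (hs : IsOmegaSolution α τ₀ p q) (hτ : τ ≤ τ₀) :
    Real.exp (logScaledH p q τ) = Real.exp (-4 * τ) * H (p τ) (q τ) := by
  rw [logScaledH, sub_eq_add_neg, Real.exp_add, Real.exp_log (hs.H_pos hτ), mul_comm]
  ring_nf

theorem logScaledH_le (hs : IsOmegaSolution α τ₀ p q) (hτ : τ ≤ τ₀) :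
    logScaledH p q τ ≤ 2 * Real.log (p τ) - 4 * τ := by
  have := Real.log_le_log (hs.H_pos hτ) (H_le_sq _ _)
  rw [Real.log_pow] at this
  unfold logScaledH
  push_cast at this
  linarith

theorem lipschitzOnWith_one_sub_sq (hs : IsOmegaSolution α τ₀ p q) (hα : 0 ≤ α) :
    LipschitzOnWith (2 + 6 * α).toNNReal (fun t => 1 - q t ^ 2) (Iic τ₀) := by
  refine (convex_Iic τ₀).lipschitzOnWith_of_nnnorm_hasDerivWithin_le
    (fun x hx =>
      ((hasDerivAt_const x (1 : ℝ)).sub ((hs.hasDerivAt_q x hx).pow 2)).hasDerivWithinAt)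
    fun x hx => ?_
  have hball := hs.sq_add_sq_lt_one hx
  have hq : |q x| ≤ 1 := abs_le_one_iff_mul_self_le_one.2 (by nlinarith [sq_nonneg (p x)])
  -- `q' = (q² - 1)(q + α) + 2αp²`
  have hq' : |q x ^ 3 + α * q x ^ 2 - q x - α + 2 * α * p x ^ 2| ≤ 1 + 3 * α := by
    obtain ⟨hq₁, hq₂⟩ := abs_le.1 hq
    rw [abs_le]
    constructor <;>
      nlinarith [sq_nonneg (p x), sq_nonneg (q x), mul_nonneg hα (sq_nonneg (p x))]
  rw [← NNReal.coe_le_coe, coe_nnnorm, Real.coe_toNNReal _ (by positivity), Real.norm_eq_abs]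
  push_cast
  rw [zero_sub, abs_neg, abs_mul, abs_mul, abs_two, pow_one]
  nlinarith [mul_le_mul hq hq' (abs_nonneg _) zero_le_one]

theorem tendsto_q_sq_of_logScaledH_le (hs : IsOmegaSolution α τ₀ p q) (hα : 0 ≤ α) {B : ℝ}
    (hB : ∀ τ ≤ τ₀, logScaledH p q τ ≤ B) : Tendsto (fun t => q t ^ 2) atBot (𝓝 1) := by
  have hg : ∀ τ ≤ τ₀, 0 ≤ 1 - q τ ^ 2 := fun τ hτ => by
    nlinarith [hs.sq_add_sq_lt_one hτ, sq_nonneg (p τ)]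
  have := tendsto_zero_of_hasDerivAt_le_neg_of_lipschitzOnWith
    (fun τ hτ => hs.hasDerivAt_logScaledH hτ) (fun τ hτ => by linarith [hg τ hτ]) hg
    (hs.lipschitzOnWith_one_sub_sq hα) hB
  simpa using (tendsto_const_nhds (x := (1 : ℝ))).sub this

theorem not_tendsto_q_one (hs : IsOmegaSolution α τ₀ p q) (hα : 1 < α) :
    ¬ Tendsto q atBot (𝓝 1) := fun h => by
  have hlog : Tendsto (fun t => -Real.log (p t)) atBot atBot :=
    tendsto_atBot_atBot_of_hasDerivAt
      (eventually_atBot.2 ⟨τ₀, fun τ hτ => (hs.hasDerivAt_log_p hτ).neg⟩)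
      ((h.pow 2).sub (h.const_mul α)).neg (by norm_num; linarith)
  obtain ⟨τ, hτ, hτ₀⟩ := ((hlog.eventually_lt_atBot 0).and (eventually_le_atBot τ₀)).exists
  have hp1 : p τ < 1 := by nlinarith [hs.sq_add_sq_lt_one hτ₀, hs.pos hτ₀, sq_nonneg (q τ)]
  linarith [Real.log_neg (hs.pos hτ₀) hp1]

theorem not_tendsto_q_neg_one (hs : IsOmegaSolution α τ₀ p q) (hα : 1 < α) :
    ¬ Tendsto q atBot (𝓝 (-1)) := fun h => by
  have hf : Tendsto (fun t => 2 * Real.log (p t) - 4 * t) atBot atBot :=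
    tendsto_atBot_atBot_of_hasDerivAt
      (eventually_atBot.2 ⟨τ₀, fun τ hτ =>
        ((hs.hasDerivAt_log_p hτ).const_mul 2).sub ((hasDerivAt_id τ).const_mul 4)⟩)
      ((((h.pow 2).sub (h.const_mul α)).const_mul 2).sub tendsto_const_nhds)
      (by norm_num; linarith)
  obtain ⟨τ, hτ, hτ₀⟩ := ((hf.eventually_lt_atBot (logScaledH p q τ₀)).and
    (eventually_le_atBot τ₀)).exists
  linarith [hs.logScaledH_le hτ₀, hs.antitoneOn_logScaledH hτ₀ (mem_Iic.2 le_rfl) hτ₀]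

end IsOmegaSolution

theorem stmt14_general (α : ℝ) (hα : 1 < α) (τ₀ : ℝ) (p q : ℝ → ℝ)
    (hp : ∀ τ ∈ Set.Iic τ₀, HasDerivAt p (p τ * (q τ) ^ 2 - α * p τ * q τ) τ)
    (hq : ∀ τ ∈ Set.Iic τ₀,
      HasDerivAt q ((q τ) ^ 3 + α * (q τ) ^ 2 - q τ - α + 2 * α * (p τ) ^ 2) τ)
    (hΩ : ∀ τ ∈ Set.Iic τ₀, (p τ, q τ) ∈ Omega) :
    Filter.Tendsto (fun τ => Real.exp (-4 * τ) * H (p τ) (q τ))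
      Filter.atBot Filter.atTop := by
  have hs : IsOmegaSolution α τ₀ p q := ⟨hp, hq, hΩ⟩
  have hψ : Tendsto (logScaledH p q) atBot atTop := by
    refine tendsto_atBot_atTop_of_antitoneOn_Iic hs.antitoneOn_logScaledH fun B => ?_
    by_contra! hB
    rcases tendsto_or_tendsto_neg_of_tendsto_sq hs.continuousOn_q
      (hs.tendsto_q_sq_of_logScaledH_le (by linarith) hB) with h | h
    exacts [hs.not_tendsto_q_one hα h, hs.not_tendsto_q_neg_one hα h]
  refine (tendsto_exp_atTop.comp hψ).congr' ?_
  filter_upwards [eventually_le_atBot τ₀] with τ hτ using hs.exp_logScaledH hτ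

/-- For `α > 1`, along every non-stationary physical solution on `(−∞, τ₀]` one has
`exp(−4τ) · H(p(τ), q(τ)) → ∞` as `τ → −∞`: `H` tends to zero strictly more slowly
than `exp(4τ)` in the approach to the initial singularity. -/
theorem stmt14 (α : ℝ) (hα : 1 < α) (τ₀ : ℝ) (p q : ℝ → ℝ)
    (hp : ∀ τ ∈ Set.Iic τ₀, HasDerivAt p (p τ * (q τ) ^ 2 - α * p τ * q τ) τ)
    (hq : ∀ τ ∈ Set.Iic τ₀,
      HasDerivAt q ((q τ) ^ 3 + α * (q τ) ^ 2 - q τ - α + 2 * α * (p τ) ^ 2) τ)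
    (hΩ : ∀ τ ∈ Set.Iic τ₀, (p τ, q τ) ∈ Omega)
    (hne : ¬ ∀ τ ∈ Set.Iic τ₀, (p τ, q τ) = ((1 / Real.sqrt 2, 0) : ℝ × ℝ)) :
    Filter.Tendsto (fun τ => Real.exp (-4 * τ) * H (p τ) (q τ))
      Filter.atBot Filter.atTop :=
  stmt14_general α hα τ₀ p q hp hq hΩ
end

section
/- (General solution for the massless scalar field.) Let I ⊆ ℝ be a nonempty open interval and let K, φ : ℝ → ℝ, with K differentiable and φ twice differentiable on I, satisfy for all t ∈ I: K'(t) = −(3/2) φ'(t)², φ''(t) = −K(t) φ'(t), the constraint K(t)² = (3/2) φ'(t)², and K(t) > 0. Then there exist a real number t' with t' < t for all t ∈ I, a constant c > 0, and a sign ε ∈ {1, −1} such that K(t) = 1/(t − t') and φ(t) = ε √(2/3) · ln((t − t')/c) for all t ∈ I. -/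
/-!
Substituting the constraint into the first equation gives `K' = -K²`, i.e. `(1/K)' = 1`, so
`K(t) = 1/(t - t')` with `t' < I` because `K > 0`. The constraint also forces
`φ'² = (2/3) K² ≠ 0`, so by continuity `φ' = ε √(2/3) K` with a fixed sign `ε` on the interval,
and integrating `φ' = ε √(2/3)/(t - t')` gives the logarithm.
-/

open Set Real

theorem Convex.is_const_of_hasDerivWithinAt_zero {E : Type*} [NormedAddCommGroup E]
    [NormedSpace ℝ E] {s : Set ℝ} (hs : Convex ℝ s) {f : ℝ → E}
    (hf : ∀ x ∈ s, HasDerivWithinAt f 0 s x) {x y : ℝ} (hx : x ∈ s) (hy : y ∈ s) :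
    f x = f y := by
  have := hs.norm_image_sub_le_of_norm_hasDerivWithin_le hf (fun _ _ => norm_zero.le) hx hy
  rw [zero_mul, norm_le_zero_iff, sub_eq_zero] at this
  exact this.symm

theorem IsPreconnected.exists_sign_eq_mul_of_sq_eq {α : Type*} [TopologicalSpace α]
    {S : Set α} (hS : IsPreconnected S) {f g : α → ℝ} (hf : ContinuousOn f S)
    (hg : ContinuousOn g S) (hsq : ∀ x ∈ S, f x ^ 2 = g x ^ 2) (hg0 : ∀ x ∈ S, g x ≠ 0) :
    ∃ ε : ℝ, (ε = 1 ∨ ε = -1) ∧ ∀ x ∈ S, f x = ε * g x := by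
  rcases hS.eq_or_eq_neg_of_sq_eq hf hg (fun x hx => hsq x hx) (fun hx => hg0 _ hx) with h | h
  · exact ⟨1, .inl rfl, fun x hx => by rw [h hx, one_mul]⟩
  · exact ⟨-1, .inr rfl, fun x hx => by rw [h hx, Pi.neg_apply, neg_one_mul]⟩

theorem Set.OrdConnected.exists_eq_one_div_sub_of_hasDerivAt_neg_sq {s : Set ℝ}
    (hs : s.OrdConnected) (hne : s.Nonempty) {K : ℝ → ℝ}
    (hK : ∀ t ∈ s, HasDerivAt K (-K t ^ 2) t) (hKpos : ∀ t ∈ s, 0 < K t) :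
    ∃ t' : ℝ, (∀ t ∈ s, t' < t) ∧ ∀ t ∈ s, K t = 1 / (t - t') := by
  obtain ⟨t₀, ht₀⟩ := hne
  have hderiv : ∀ t ∈ s, HasDerivWithinAt (fun u => (K u)⁻¹ - u) 0 s t := by
    intro t ht
    have hK0 : K t ≠ 0 := (hKpos t ht).ne'
    refine (((hK t ht).inv hK0).sub (hasDerivAt_id' t)).hasDerivWithinAt.congr_deriv ?_
    rw [neg_neg, div_self (pow_ne_zero 2 hK0), sub_self]
  have hinv : ∀ t ∈ s, (K t)⁻¹ = t - (t₀ - (K t₀)⁻¹) := fun t ht => by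
    linarith [hs.convex.is_const_of_hasDerivWithinAt_zero hderiv ht ht₀]
  refine ⟨t₀ - (K t₀)⁻¹, fun t ht => ?_, fun t ht => by rw [← hinv t ht, one_div, inv_inv]⟩
  have := hinv t ht ▸ inv_pos.mpr (hKpos t ht)
  linarith

theorem Set.OrdConnected.exists_eq_mul_log_div_of_hasDerivAt {s : Set ℝ} (hs : s.OrdConnected)
    (hne : s.Nonempty) {φ : ℝ → ℝ} {a t' : ℝ} (ha : a ≠ 0) (ht' : ∀ t ∈ s, t' < t)
    (hφ : ∀ t ∈ s, HasDerivAt φ (a / (t - t')) t) :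
    ∃ c > (0 : ℝ), ∀ t ∈ s, φ t = a * log ((t - t') / c) := by
  obtain ⟨t₀, ht₀⟩ := hne
  have hderiv : ∀ t ∈ s, HasDerivWithinAt (fun u => φ u - a * log (u - t')) 0 s t := by
    intro t ht
    have hlog := ((hasDerivAt_id' t).sub_const t').log (sub_pos.mpr (ht' t ht)).ne'
    exact ((hφ t ht).sub (hlog.const_mul a)).hasDerivWithinAt.congr_deriv (by ring)
  set C := φ t₀ - a * log (t₀ - t')
  refine ⟨exp (-C / a), exp_pos _, fun t ht => ?_⟩
  have hC := hs.convex.is_const_of_hasDerivWithinAt_zero hderiv ht ht₀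
  rw [log_div (sub_pos.mpr (ht' t ht)).ne' (exp_pos _).ne', log_exp]
  field_simp
  linarith

theorem stmt17_general (I : Set ℝ) (hI : I.OrdConnected)
    (hIne : I.Nonempty) (K φ ψ : ℝ → ℝ)
    (hφ : ∀ t ∈ I, HasDerivAt φ (ψ t) t)
    (hψ : ∀ t ∈ I, HasDerivAt ψ (-K t * ψ t) t)
    (hK : ∀ t ∈ I, HasDerivAt K (-(3 / 2) * (ψ t) ^ 2) t)
    (hcon : ∀ t ∈ I, (K t) ^ 2 = (3 / 2) * (ψ t) ^ 2)
    (hKpos : ∀ t ∈ I, 0 < K t) :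
    ∃ t' : ℝ, (∀ t ∈ I, t' < t) ∧
      ∃ c > (0 : ℝ), ∃ ε : ℝ, (ε = 1 ∨ ε = -1) ∧
        ∀ t ∈ I, K t = 1 / (t - t') ∧
          φ t = ε * Real.sqrt (2 / 3) * Real.log ((t - t') / c) := by
  have hsq : sqrt (2 / 3) ^ 2 = 2 / 3 := sq_sqrt (by norm_num)
  have hK' : ∀ t ∈ I, HasDerivAt K (-K t ^ 2) t := fun t ht => by
    convert hK t ht using 1
    rw [hcon t ht]
    ring
  obtain ⟨t', ht', hKeq⟩ := hI.exists_eq_one_div_sub_of_hasDerivAt_neg_sq hIne hK' hKpos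
  obtain ⟨ε, hε, hψK⟩ := hI.isPreconnected.exists_sign_eq_mul_of_sq_eq (f := ψ)
    (g := fun t => sqrt (2 / 3) * K t)
    (fun t ht => (hψ t ht).continuousAt.continuousWithinAt)
    (fun t ht => ((hK' t ht).continuousAt.const_mul _).continuousWithinAt)
    (fun t ht => by rw [mul_pow, hsq, hcon t ht]; ring)
    (fun t ht => mul_ne_zero (by positivity) (hKpos t ht).ne')
  have hε0 : ε * sqrt (2 / 3) ≠ 0 := mul_ne_zero (by rcases hε with rfl | rfl <;> norm_num)
    (by positivity)
  obtain ⟨c, hc, hφeq⟩ := hI.exists_eq_mul_log_div_of_hasDerivAt hIne hε0 ht' fun t ht => by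
    convert hφ t ht using 1
    rw [hψK t ht, hKeq t ht]
    ring
  exact ⟨t', ht', c, hc, ε, hε, fun t ht => ⟨hKeq t ht, hφeq t ht⟩⟩

/-- (General solution for the massless scalar field.) If `K, φ` (with `ψ = φ'`) solve
the massless FRW equations `K' = −(3/2) φ'²`, `φ'' = −K φ'`, with constraint
`K² = (3/2) φ'²` and `K > 0`, on a nonempty open interval `I`, then there are
`t' < I`, `c > 0` and a sign `ε ∈ {1, −1}` with `K(t) = 1/(t − t')` and
`φ(t) = ε √(2/3) ln((t − t')/c)` on `I`. -/
theorem stmt17 (I : Set ℝ) (hI : I.OrdConnected) (hIopen : IsOpen I)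
    (hIne : I.Nonempty) (K φ ψ : ℝ → ℝ)
    (hφ : ∀ t ∈ I, HasDerivAt φ (ψ t) t)
    (hψ : ∀ t ∈ I, HasDerivAt ψ (-K t * ψ t) t)
    (hK : ∀ t ∈ I, HasDerivAt K (-(3 / 2) * (ψ t) ^ 2) t)
    (hcon : ∀ t ∈ I, (K t) ^ 2 = (3 / 2) * (ψ t) ^ 2)
    (hKpos : ∀ t ∈ I, 0 < K t) :
    ∃ t' : ℝ, (∀ t ∈ I, t' < t) ∧
      ∃ c > (0 : ℝ), ∃ ε : ℝ, (ε = 1 ∨ ε = -1) ∧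
        ∀ t ∈ I, K t = 1 / (t - t') ∧
          φ t = ε * Real.sqrt (2 / 3) * Real.log ((t - t') / c) :=
  stmt17_general I hI hIne K φ ψ hφ hψ hK hcon hKpos
end

section
/- Let λ > √6 and let (K, φ) be a non-trivial scalar field cosmology on (0, t₀] such that K(t) → ∞ as t → 0⁺. Define the spatial volume element v(t) = exp(−∫_t^{t₀} K(u) du), so that v'(t) = K(t) v(t) and v(t₀) = 1. Then v(t)/t → 0 as t → 0⁺; that is, near the singularity the volume element expands strictly more slowly than linearly in proper time. -/
/-!
Since `K' = -(3/2) ψ² ≥ -K²`, comparing `1/K` with `t` gives `t K(t) ≥ 1`; and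
`v(t)/t = exp (-∫_t^{t₀} (K u - 1/u) du) / t₀`, so it suffices that `∫_t^{t₀} (K u - 1/u) du`
diverges as `t → 0⁺`. If it stayed bounded, `t K` would be bounded, hence so would `t² V(φ)`
and `∫_t^{t₀} |1 - (3/2)(u ψ)²| du/u`. As `u ψ` is Lipschitz in `log u`, the latter bound keeps
`u ψ` away from `0` near `u = 0`, so `ψ` has a constant sign there, say `ψ > 0`. Then
`λ ψ ≥ c (1 - |1 - (3/2)(u ψ)²|) / u` with `c = λ √(2/3) > 2`, which makes
`log (t² e^{-λφ}) ≥ (c - 2) log (1/t) - O(1)` blow up, contradicting the bound on `t² V(φ)`.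
-/

open Set Filter Topology MeasureTheory intervalIntegral Real

section IntervalCalculus

variable {t₀ a b : ℝ}

theorem ContinuousOn.intervalIntegrable_of_Ioc {f : ℝ → ℝ} (hf : ContinuousOn f (Ioc 0 t₀))
    (ha : 0 < a) (hab : a ≤ b) (hb : b ≤ t₀) : IntervalIntegrable f volume a b :=
  (hf.mono (by rw [uIcc_of_le hab]; exact Icc_subset_Ioc ha hb)).intervalIntegrable

theorem continuousOn_inv_Ioc : ContinuousOn (fun x : ℝ => x⁻¹) (Ioc 0 t₀) :=
  continuousOn_inv₀.mono fun _ hx => hx.1.ne'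

theorem ContinuousOn.abs_one_sub_sq_div {P : ℝ → ℝ} (hP : ContinuousOn P (Ioc 0 t₀)) :
    ContinuousOn (fun u => |1 - 3 / 2 * P u ^ 2| / u) (Ioc 0 t₀) :=
  (continuousOn_const.sub (continuousOn_const.mul (hP.pow 2))).abs.div continuousOn_id
    fun _ hu => hu.1.ne'

theorem sub_le_integral_of_hasDerivAt_le {F F' f : ℝ → ℝ}
    (hF : ∀ x ∈ Ioc 0 t₀, HasDerivAt F (F' x) x) (hf : ContinuousOn f (Ioc 0 t₀))
    (hle : ∀ x ∈ Ioc 0 t₀, F' x ≤ f x) (ha : 0 < a) (hab : a ≤ b) (hb : b ≤ t₀) :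
    F b - F a ≤ ∫ x in a..b, f x := by
  have hsub : Icc a b ⊆ Ioc 0 t₀ := Icc_subset_Ioc ha hb
  exact sub_le_integral_of_hasDeriv_right_of_le hab
    (fun x hx => (hF x (hsub hx)).continuousAt.continuousWithinAt)
    (fun x hx => (hF x (hsub (Ioo_subset_Icc_self hx))).hasDerivWithinAt)
    (hf.mono hsub).integrableOn_Icc (fun x hx => hle x (hsub (Ioo_subset_Icc_self hx)))

theorem integral_le_sub_of_le_hasDerivAt {F F' f : ℝ → ℝ}
    (hF : ∀ x ∈ Ioc 0 t₀, HasDerivAt F (F' x) x) (hf : ContinuousOn f (Ioc 0 t₀))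
    (hle : ∀ x ∈ Ioc 0 t₀, f x ≤ F' x) (ha : 0 < a) (hab : a ≤ b) (hb : b ≤ t₀) :
    ∫ x in a..b, f x ≤ F b - F a := by
  have hsub : Icc a b ⊆ Ioc 0 t₀ := Icc_subset_Ioc ha hb
  exact integral_le_sub_of_hasDeriv_right_of_le hab
    (fun x hx => (hF x (hsub hx)).continuousAt.continuousWithinAt)
    (fun x hx => (hF x (hsub (Ioo_subset_Icc_self hx))).hasDerivWithinAt)
    (hf.mono hsub).integrableOn_Icc (fun x hx => hle x (hsub (Ioo_subset_Icc_self hx)))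

theorem integral_const_div_of_pos {c : ℝ} (ha : 0 < a) (hb : 0 < b) :
    ∫ x in a..b, c / x = c * log (b / a) := by
  simp_rw [div_eq_mul_inv c, intervalIntegral.integral_const_mul, integral_inv_of_pos ha hb]

theorem abs_sub_le_mul_log_div {P P' : ℝ → ℝ} {Λ : ℝ}
    (hP : ∀ x ∈ Ioc 0 t₀, HasDerivAt P (P' x) x) (hP' : ∀ x ∈ Ioc 0 t₀, |P' x| ≤ Λ / x)
    (ha : 0 < a) (hab : a ≤ b) (hb : b ≤ t₀) : |P b - P a| ≤ Λ * log (b / a) := by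
  have hc : ContinuousOn (fun x => Λ / x) (Ioc 0 t₀) :=
    continuousOn_const.div continuousOn_id fun _ hx => hx.1.ne'
  rw [← integral_const_div_of_pos ha (ha.trans_le hab), abs_le]
  constructor
  · have := sub_le_integral_of_hasDerivAt_le (F := fun x => -P x) (fun x hx => (hP x hx).neg) hc
      (fun x hx => neg_le.1 (abs_le.1 (hP' x hx)).1) ha hab hb
    linarith
  · exact sub_le_integral_of_hasDerivAt_le hP hc (fun x hx => le_of_abs_le (hP' x hx)) ha hab hb

theorem exists_integral_lt_of_integral_le {h : ℝ → ℝ} {A ε : ℝ} (ht₀ : 0 < t₀)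
    (hh : ContinuousOn h (Ioc 0 t₀)) (hA : ∀ t ∈ Ioc 0 t₀, ∫ u in t..t₀, h u ≤ A)
    (hε : 0 < ε) : ∃ t₁ ∈ Ioc 0 t₀, ∀ t ∈ Ioc 0 t₁, ∫ u in t..t₁, h u < ε := by
  set S := (fun t => ∫ u in t..t₀, h u) '' Ioc 0 t₀
  have hS : BddAbove S := ⟨A, by rintro _ ⟨t, ht, rfl⟩; exact hA t ht⟩
  obtain ⟨_, ⟨t₁, ht₁, rfl⟩, hlt⟩ :=
    exists_lt_of_lt_csSup ((nonempty_Ioc.2 ht₀).image _) (sub_lt_self (sSup S) hε)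
  refine ⟨t₁, ht₁, fun t ht => ?_⟩
  have hle : ∫ u in t..t₀, h u ≤ sSup S := le_csSup hS ⟨t, ⟨ht.1, ht.2.trans ht₁.2⟩, rfl⟩
  have hsplit := integral_add_adjacent_intervals
    (hh.intervalIntegrable_of_Ioc ht.1 ht.2 ht₁.2) (hh.intervalIntegrable_of_Ioc ht₁.1 ht₁.2 le_rfl)
  linarith

theorem tendsto_integral_atTop_of_forall_exists_lt {g : ℝ → ℝ}
    (hg : ContinuousOn g (Ioc 0 t₀)) (hg0 : ∀ u ∈ Ioc 0 t₀, 0 ≤ g u)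
    (hunb : ∀ A, ∃ t ∈ Ioc 0 t₀, A < ∫ u in t..t₀, g u) :
    Tendsto (fun t => ∫ u in t..t₀, g u) (𝓝[>] 0) atTop := by
  refine tendsto_atTop.2 fun A => ?_
  obtain ⟨t, ht, hA⟩ := hunb A
  filter_upwards [Ioc_mem_nhdsGT ht.1] with x hx
  exact hA.le.trans (integral_mono_interval hx.2 ht.2 le_rfl
    (ae_restrict_of_forall_mem measurableSet_Ioc fun u hu => hg0 u ⟨hx.1.trans hu.1, hu.2⟩)
    (hg.intervalIntegrable_of_Ioc hx.1 (hx.2.trans ht.2) le_rfl))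

theorem tendsto_exp_neg_integral_div_of_tendsto {K : ℝ → ℝ} (ht₀ : 0 < t₀)
    (hK : ContinuousOn K (Ioc 0 t₀))
    (h : Tendsto (fun t => ∫ u in t..t₀, (K u - u⁻¹)) (𝓝[>] 0) atTop) :
    Tendsto (fun t => exp (-∫ u in t..t₀, K u) / t) (𝓝[>] 0) (𝓝 0) := by
  have hlim : Tendsto (fun t => exp (-∫ u in t..t₀, (K u - u⁻¹)) / t₀) (𝓝[>] 0) (𝓝 0) := by
    simpa using (tendsto_exp_atBot.comp (tendsto_neg_atTop_atBot.comp h)).div_const t₀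
  refine hlim.congr' ?_
  filter_upwards [Ioc_mem_nhdsGT ht₀] with t ht
  have hsplit : ∫ u in t..t₀, (K u - u⁻¹) = (∫ u in t..t₀, K u) - log (t₀ / t) := by
    rw [integral_sub (hK.intervalIntegrable_of_Ioc ht.1 ht.2 le_rfl)
      (continuousOn_inv_Ioc.intervalIntegrable_of_Ioc ht.1 ht.2 le_rfl),
      integral_inv_of_pos ht.1 ht₀]
  rw [hsplit, neg_sub, exp_sub, exp_log (div_pos ht₀ ht.1), exp_neg]
  field_simp

end IntervalCalculus

theorem IsPreconnected.forall_pos_or_forall_neg {f : ℝ → ℝ} {s : Set ℝ} (hs : IsPreconnected s)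
    (hf : ContinuousOn f s) (h0 : ∀ x ∈ s, f x ≠ 0) :
    (∀ x ∈ s, 0 < f x) ∨ ∀ x ∈ s, f x < 0 := by
  by_contra! h
  obtain ⟨⟨a, ha, hfa⟩, b, hb, hfb⟩ := h
  obtain ⟨c, hc, hfc⟩ := hs.intermediate_value ha hb hf ⟨hfa, hfb⟩
  exact h0 c hc hfc

theorem sqrt_two_thirds_mul_one_sub_abs_le {x : ℝ} (hx : 0 ≤ x) :
    √(2 / 3) * (1 - |1 - 3 / 2 * x ^ 2|) ≤ x := by
  have hs : √(2 / 3) ^ 2 = 2 / 3 := sq_sqrt (by norm_num)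
  have hs0 : 0 < √(2 / 3) := sqrt_pos.2 (by norm_num)
  rcases le_total (3 / 2 * x ^ 2) 1 with h | h
  · rw [abs_of_nonneg (by linarith)]
    have hxs : x ≤ √(2 / 3) := abs_le_of_sq_le_sq (by linarith) hs0.le |>.trans' (le_abs_self x)
    nlinarith [mul_le_mul_of_nonneg_left hxs (mul_nonneg hs0.le hx)]
  · rw [abs_of_nonpos (by linarith)]
    have hxs : √(2 / 3) ≤ x := abs_le_of_sq_le_sq (by linarith) hx |>.trans' (le_abs_self _)
    nlinarith [mul_nonneg hs0.le (by linarith : (0 : ℝ) ≤ 3 / 2 * x ^ 2 - 1)]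

section Riccati

variable {t₀ : ℝ} {K K' : ℝ → ℝ}

theorem one_le_mul_of_tendsto_atTop (hK : ∀ t ∈ Ioc 0 t₀, HasDerivAt K (K' t) t)
    (hK' : ∀ t ∈ Ioc 0 t₀, -K' t ≤ K t ^ 2) (hKpos : ∀ t ∈ Ioc 0 t₀, 0 < K t)
    (hsing : Tendsto K (𝓝[>] 0) atTop) {t : ℝ} (ht : t ∈ Ioc 0 t₀) : 1 ≤ t * K t := by
  have hstep : ∀ x ∈ Ioc 0 t, (K t)⁻¹ - (K x)⁻¹ ≤ t - x := fun x hx => by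
    have := sub_le_integral_of_hasDerivAt_le (f := fun _ => 1)
      (fun y hy => (hK y hy).inv (hKpos y hy).ne') continuousOn_const
      (fun y hy => (div_le_one (pow_pos (hKpos y hy) 2)).2 (hK' y hy)) hx.1 hx.2 ht.2
    simpa using this
  have hlim : (K t)⁻¹ - 0 ≤ t - 0 :=
    le_of_tendsto_of_tendsto (tendsto_const_nhds.sub hsing.inv_tendsto_atTop)
      (tendsto_const_nhds.sub (tendsto_id.mono_left nhdsWithin_le_nhds))
      (eventually_of_mem (Ioc_mem_nhdsGT ht.1) hstep)
  rw [sub_zero, sub_zero, inv_le_iff_one_le_mul₀ (hKpos t ht)] at hlim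
  linarith

theorem mul_le_mul_exp_integral_sub_inv (hK : ∀ t ∈ Ioc 0 t₀, HasDerivAt K (K' t) t)
    (hK' : ∀ t ∈ Ioc 0 t₀, -K' t ≤ K t ^ 2) (hKpos : ∀ t ∈ Ioc 0 t₀, 0 < K t)
    {t : ℝ} (ht : t ∈ Ioc 0 t₀) :
    t * K t ≤ t₀ * K t₀ * exp (∫ u in t..t₀, (K u - u⁻¹)) := by
  have ht₀ : t₀ ∈ Ioc 0 t₀ := ⟨ht.1.trans_le ht.2, le_rfl⟩
  have hpos : ∀ u ∈ Ioc 0 t₀, 0 < u * K u := fun u hu => mul_pos hu.1 (hKpos u hu)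
  -- `(log (t K))' = 1/t + K'/K ≥ -(K - 1/t)` because `-K' ≤ K²`
  have hlog := integral_le_sub_of_le_hasDerivAt (F := fun u => log (u * K u))
    (f := fun u => -(K u - u⁻¹))
    (fun u hu => ((hasDerivAt_id' u).mul (hK u hu)).log (hpos u hu).ne')
    ((HasDerivAt.continuousOn hK).sub continuousOn_inv_Ioc).neg (fun u hu => by
      change -(K u - u⁻¹) ≤ (1 * K u + u * K' u) / (u * K u)
      rw [le_div_iff₀ (hpos u hu)]
      field_simp [hu.1.ne']
      nlinarith [hK' u hu, hu.1]) ht.1 ht.2 le_rfl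
  rw [intervalIntegral.integral_neg] at hlog
  calc t * K t = exp (log (t * K t)) := (exp_log (hpos t ht)).symm
    _ ≤ exp (log (t₀ * K t₀) + ∫ u in t..t₀, (K u - u⁻¹)) := exp_le_exp.2 (by linarith)
    _ = _ := by rw [exp_add, exp_log (hpos t₀ ht₀)]

end Riccati

theorem half_le_integral_of_eq_zero {P : ℝ → ℝ} {t₀ Λ δ z : ℝ}
    (hPc : ContinuousOn P (Ioc 0 t₀))
    (hP : ∀ a b, 0 < a → a ≤ b → b ≤ t₀ → |P b - P a| ≤ Λ * log (b / a))
    (hΛ : 0 ≤ Λ) (hδ : 0 ≤ δ) (hΛδ : Λ * δ ≤ 1 / 3) (hz : z ∈ Ioc 0 t₀) (hPz : P z = 0) :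
    δ / 2 ≤ ∫ u in z * exp (-δ)..z, |1 - 3 / 2 * P u ^ 2| / u := by
  set a := z * exp (-δ)
  have ha : 0 < a := mul_pos hz.1 (exp_pos _)
  have haz : a ≤ z := mul_le_of_le_one_right hz.1.le (exp_le_one_iff.2 (by linarith))
  have hza : z = exp δ * a := by
    simp only [a]; rw [mul_left_comm, ← exp_add, add_neg_cancel, exp_zero, mul_one]
  -- near the zero `|P| ≤ Λ δ ≤ 1/3`, so the integrand is at least `1 / (2u)`
  have hlow : ∀ u ∈ Icc a z, 1 / 2 / u ≤ |1 - 3 / 2 * P u ^ 2| / u := fun u hu => by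
    have hu0 : 0 < u := ha.trans_le hu.1
    have hlog : log (z / u) ≤ δ := by
      rw [log_le_iff_le_exp (div_pos hz.1 hu0), div_le_iff₀ hu0, hza]
      gcongr; exact hu.1
    have hPu : |P u| ≤ 1 / 3 := by
      have := hP u z hu0 hu.2 hz.2
      rw [hPz, zero_sub, abs_neg] at this
      linarith [mul_le_mul_of_nonneg_left hlog hΛ]
    have hsq : P u ^ 2 ≤ 1 / 9 := by nlinarith [abs_nonneg (P u), sq_abs (P u)]
    gcongr
    exact (by linarith : (1 : ℝ) / 2 ≤ 1 - 3 / 2 * P u ^ 2).trans (le_abs_self _)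
  have hinv : ContinuousOn (fun u => 1 / 2 / u) (Ioc 0 t₀) :=
    continuousOn_const.div continuousOn_id fun u hu => hu.1.ne'
  have := integral_mono_on haz (hinv.intervalIntegrable_of_Ioc ha haz hz.2)
    (hPc.abs_one_sub_sq_div.intervalIntegrable_of_Ioc ha haz hz.2) hlow
  rwa [integral_const_div_of_pos ha hz.1,
    show z / a = exp δ by rw [hza, mul_div_cancel_right₀ _ ha.ne'], log_exp,
    one_div_mul_eq_div] at this

theorem exists_forall_ne_zero_of_integral_le {P : ℝ → ℝ} {t₀ Λ A : ℝ} (ht₀ : 0 < t₀)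
    (hΛ : 0 < Λ) (hPc : ContinuousOn P (Ioc 0 t₀))
    (hP : ∀ a b, 0 < a → a ≤ b → b ≤ t₀ → |P b - P a| ≤ Λ * log (b / a))
    (hA : ∀ t ∈ Ioc 0 t₀, ∫ u in t..t₀, |1 - 3 / 2 * P u ^ 2| / u ≤ A) :
    ∃ t₁ ∈ Ioc 0 t₀, ∀ u ∈ Ioc 0 t₁, P u ≠ 0 := by
  set δ := (3 * Λ)⁻¹
  have hδ : 0 < δ := by positivity
  have hc := hPc.abs_one_sub_sq_div
  obtain ⟨t₁, ht₁, hsmall⟩ := exists_integral_lt_of_integral_le ht₀ hc hA (half_pos hδ)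
  refine ⟨t₁, ht₁, fun z hz hPz => ?_⟩
  have ha : 0 < z * exp (-δ) := mul_pos hz.1 (exp_pos _)
  have haz : z * exp (-δ) ≤ z := mul_le_of_le_one_right hz.1.le (exp_le_one_iff.2 (by linarith))
  have hwin := half_le_integral_of_eq_zero hPc hP hΛ.le hδ.le (by simp only [δ]; field_simp; rfl)
    ⟨hz.1, hz.2.trans ht₁.2⟩ hPz
  have hmono := integral_mono_interval le_rfl haz hz.2
    (ae_restrict_of_forall_mem measurableSet_Ioc fun u hu =>
      div_nonneg (abs_nonneg (1 - 3 / 2 * P u ^ 2)) (ha.trans hu.1).le)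
    (hc.intervalIntegrable_of_Ioc ha (haz.trans hz.2) ht₁.2)
  linarith [hsmall _ ⟨ha, haz.trans hz.2⟩]

noncomputable def potential (lam x : ℝ) : ℝ := exp (lam * x) + exp (-(lam * x))

theorem potential_pos (lam x : ℝ) : 0 < potential lam x := by
  unfold potential; positivity

theorem continuous_potential (lam : ℝ) : Continuous (potential lam) := by
  unfold potential; fun_prop

section Cosmology

variable {lam t₀ t₁ M A : ℝ} {K φ ψ : ℝ → ℝ}

theorem sq_mul_eq_of_constraint
    (hcon : ∀ t ∈ Ioc 0 t₀, K t ^ 2 = 3 * potential lam (φ t) + 3 / 2 * ψ t ^ 2)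
    {t : ℝ} (ht : t ∈ Ioc 0 t₀) :
    (t * K t) ^ 2 = 3 * (t ^ 2 * potential lam (φ t)) + 3 / 2 * (t * ψ t) ^ 2 := by
  rw [mul_pow, hcon t ht]; ring

theorem neg_deriv_le_sq_of_constraint
    (hcon : ∀ t ∈ Ioc 0 t₀, K t ^ 2 = 3 * potential lam (φ t) + 3 / 2 * ψ t ^ 2)
    {t : ℝ} (ht : t ∈ Ioc 0 t₀) : -(-(3 / 2) * ψ t ^ 2) ≤ K t ^ 2 := by
  linarith [hcon t ht, potential_pos lam (φ t)]

theorem sq_mul_potential_le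
    (hcon : ∀ t ∈ Ioc 0 t₀, K t ^ 2 = 3 * potential lam (φ t) + 3 / 2 * ψ t ^ 2)
    (hk1 : ∀ t ∈ Ioc 0 t₀, 1 ≤ t * K t) (hKM : ∀ t ∈ Ioc 0 t₀, t * K t ≤ M)
    {t : ℝ} (ht : t ∈ Ioc 0 t₀) : t ^ 2 * potential lam (φ t) ≤ M ^ 2 := by
  have := pow_le_pow_left₀ (zero_le_one.trans (hk1 t ht)) (hKM t ht) 2
  nlinarith [sq_mul_eq_of_constraint hcon ht, sq_nonneg (t * ψ t),
    mul_pos (pow_pos ht.1 2) (potential_pos lam (φ t))]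

theorem integral_potential_le (hK : ∀ t ∈ Ioc 0 t₀, HasDerivAt K (-(3 / 2) * ψ t ^ 2) t)
    (hcon : ∀ t ∈ Ioc 0 t₀, K t ^ 2 = 3 * potential lam (φ t) + 3 / 2 * ψ t ^ 2)
    (hφc : ContinuousOn φ (Ioc 0 t₀)) (hk1 : ∀ t ∈ Ioc 0 t₀, 1 ≤ t * K t)
    (hKM : ∀ t ∈ Ioc 0 t₀, t * K t ≤ M) {t : ℝ} (ht : t ∈ Ioc 0 t₀) :
    ∫ u in t..t₀, 3 * u * potential lam (φ u)
      ≤ t₀ * K t₀ + M * ∫ u in t..t₀, (K u - u⁻¹) := by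
  have hVc : ContinuousOn (fun u => 3 * u * potential lam (φ u)) (Ioc 0 t₀) :=
    (continuousOn_const.mul continuousOn_id).mul ((continuous_potential lam).comp_continuousOn hφc)
  have hgc : ContinuousOn (fun u => M * (K u - u⁻¹)) (Ioc 0 t₀) :=
    continuousOn_const.mul ((HasDerivAt.continuousOn hK).sub continuousOn_inv_Ioc)
  -- `(t K)' = 3 t V - t K (K - 1/t)` by the constraint, and `t K ≤ M`
  have hFTC := integral_le_sub_of_le_hasDerivAt (F := fun u => u * K u)
    (f := fun u => 3 * u * potential lam (φ u) - M * (K u - u⁻¹))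
    (fun u hu => (hasDerivAt_id' u).mul (hK u hu)) (hVc.sub hgc)
    (fun u hu => by
      have hg : 0 ≤ K u - u⁻¹ := by
        rw [sub_nonneg, inv_le_iff_one_le_mul₀' hu.1]; exact hk1 u hu
      have hKg : u * K u * (K u - u⁻¹) = u * K u ^ 2 - K u := by field_simp [hu.1.ne']
      have hcon' : u * K u ^ 2 = 3 * u * potential lam (φ u) + u * (3 / 2 * ψ u ^ 2) := by
        rw [hcon u hu]; ring
      linarith [mul_le_mul_of_nonneg_right (hKM u hu) hg])
    ht.1 ht.2 le_rfl
  rw [integral_sub (hVc.intervalIntegrable_of_Ioc ht.1 ht.2 le_rfl)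
    (hgc.intervalIntegrable_of_Ioc ht.1 ht.2 le_rfl),
    intervalIntegral.integral_const_mul] at hFTC
  nlinarith [hk1 t ht]

theorem integral_abs_one_sub_sq_le (hK : ∀ t ∈ Ioc 0 t₀, HasDerivAt K (-(3 / 2) * ψ t ^ 2) t)
    (hcon : ∀ t ∈ Ioc 0 t₀, K t ^ 2 = 3 * potential lam (φ t) + 3 / 2 * ψ t ^ 2)
    (hφc : ContinuousOn φ (Ioc 0 t₀)) (hψc : ContinuousOn ψ (Ioc 0 t₀))
    (hk1 : ∀ t ∈ Ioc 0 t₀, 1 ≤ t * K t) (hKM : ∀ t ∈ Ioc 0 t₀, t * K t ≤ M)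
    {t : ℝ} (ht : t ∈ Ioc 0 t₀) :
    ∫ u in t..t₀, |1 - 3 / 2 * (u * ψ u) ^ 2| / u
      ≤ t₀ * K t₀ + (2 * M + 1) * ∫ u in t..t₀, (K u - u⁻¹) := by
  have hgc : ContinuousOn (fun u => (M + 1) * (K u - u⁻¹)) (Ioc 0 t₀) :=
    continuousOn_const.mul ((HasDerivAt.continuousOn hK).sub continuousOn_inv_Ioc)
  have hVc : ContinuousOn (fun u => 3 * u * potential lam (φ u)) (Ioc 0 t₀) :=
    (continuousOn_const.mul continuousOn_id).mul ((continuous_potential lam).comp_continuousOn hφc)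
  have hsum : ContinuousOn (fun u => (M + 1) * (K u - u⁻¹) + 3 * u * potential lam (φ u))
      (Ioc 0 t₀) := hgc.add hVc
  have hc : ContinuousOn (fun u => |1 - 3 / 2 * (u * ψ u) ^ 2| / u) (Ioc 0 t₀) :=
    ((continuousOn_id' _).mul hψc).abs_one_sub_sq_div
  -- `1 - 3/2 (t ψ)² = 1 - (t K)² + 3 t² V`, and `(t K)² - 1 ≤ (M + 1) t (K - 1/t)`
  have hpt : ∀ u ∈ Icc t t₀, |1 - 3 / 2 * (u * ψ u) ^ 2| / u
      ≤ (M + 1) * (K u - u⁻¹) + 3 * u * potential lam (φ u) := fun u hu => by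
    have hu : u ∈ Ioc 0 t₀ := ⟨ht.1.trans_le hu.1, hu.2⟩
    have hV := potential_pos lam (φ u)
    have hk := hk1 u hu
    rw [div_le_iff₀ hu.1, abs_le]
    have e : ((M + 1) * (K u - u⁻¹) + 3 * u * potential lam (φ u)) * u
        = (M + 1) * (u * K u - 1) + 3 * u ^ 2 * potential lam (φ u) := by
      field_simp [hu.1.ne']
    rw [e]
    constructor <;> nlinarith [hcon u hu, hKM u hu, sq_nonneg u]
  have hmono := integral_mono_on ht.2 (hc.intervalIntegrable_of_Ioc ht.1 ht.2 le_rfl)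
    (hsum.intervalIntegrable_of_Ioc ht.1 ht.2 le_rfl) hpt
  rw [integral_add (hgc.intervalIntegrable_of_Ioc ht.1 ht.2 le_rfl)
    (hVc.intervalIntegrable_of_Ioc ht.1 ht.2 le_rfl), intervalIntegral.integral_const_mul] at hmono
  linarith [integral_potential_le hK hcon hφc hk1 hKM ht]

theorem abs_mul_sub_mul_le_mul_log_div (hlam : 0 < lam)
    (hψ : ∀ t ∈ Ioc 0 t₀, HasDerivAt ψ
      (-K t * ψ t - lam * (exp (lam * φ t) - exp (-(lam * φ t)))) t)
    (hcon : ∀ t ∈ Ioc 0 t₀, K t ^ 2 = 3 * potential lam (φ t) + 3 / 2 * ψ t ^ 2)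
    (hk1 : ∀ t ∈ Ioc 0 t₀, 1 ≤ t * K t) (hKM : ∀ t ∈ Ioc 0 t₀, t * K t ≤ M)
    {a b : ℝ} (ha : 0 < a) (hab : a ≤ b) (hb : b ≤ t₀) :
    |b * ψ b - a * ψ a| ≤ (1 + lam) * M ^ 2 * log (b / a) := by
  refine abs_sub_le_mul_log_div (fun u hu => (hasDerivAt_id' u).mul (hψ u hu)) (fun u hu => ?_)
    ha hab hb
  have hu0 := hu.1
  have hk := hk1 u hu
  have hM : u * K u ≤ M := hKM u hu
  have e₁ : 0 ≤ u ^ 2 * exp (lam * φ u) := by positivity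
  have e₂ : 0 ≤ u ^ 2 * exp (-(lam * φ u)) := by positivity
  have hcon' := sq_mul_eq_of_constraint hcon hu
  rw [potential, mul_add] at hcon'
  have hp : |u * ψ u| ≤ M := abs_le_of_sq_le_sq (by nlinarith) (by linarith)
  have hk' : |1 - u * K u| ≤ M := by rw [abs_sub_comm, abs_of_nonneg (by linarith)]; linarith
  have he : |u ^ 2 * exp (lam * φ u) - u ^ 2 * exp (-(lam * φ u))| ≤ M ^ 2 :=
    abs_sub_le_iff.2 ⟨by nlinarith, by nlinarith⟩
  rw [le_div_iff₀ hu0]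
  calc |1 * ψ u + u * (-K u * ψ u - lam * (exp (lam * φ u) - exp (-(lam * φ u))))| * u
      = |u * ψ u * (1 - u * K u)
          - lam * (u ^ 2 * exp (lam * φ u) - u ^ 2 * exp (-(lam * φ u)))| := by
        rw [← abs_of_pos hu0, ← abs_mul, abs_of_pos hu0]; ring_nf
    _ ≤ |u * ψ u| * |1 - u * K u|
          + lam * |u ^ 2 * exp (lam * φ u) - u ^ 2 * exp (-(lam * φ u))| := by
        rw [← abs_mul, ← abs_of_pos hlam, ← abs_mul, abs_of_pos hlam]; exact abs_sub _ _
    _ ≤ M * M + lam * M ^ 2 := by gcongr; linarith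
    _ = (1 + lam) * M ^ 2 := by ring

theorem two_mul_log_sub_mul_sub_le (hlam : 0 ≤ lam)
    (hφ : ∀ t ∈ Ioc 0 t₁, HasDerivAt φ (ψ t) t) (hψc : ContinuousOn ψ (Ioc 0 t₁))
    (hpos : ∀ t ∈ Ioc 0 t₁, 0 < ψ t)
    (hA : ∀ t ∈ Ioc 0 t₁, ∫ u in t..t₁, |1 - 3 / 2 * (u * ψ u) ^ 2| / u ≤ A)
    {t : ℝ} (ht : t ∈ Ioc 0 t₁) :
    (2 * log t₁ - lam * φ t₁) - (2 * log t - lam * φ t)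
      ≤ (2 - lam * √(2 / 3)) * log (t₁ / t) + lam * √(2 / 3) * A := by
  set c := lam * √(2 / 3)
  have hinv : ContinuousOn (fun u => (2 - c) / u) (Ioc 0 t₁) :=
    continuousOn_const.div continuousOn_id fun u hu => hu.1.ne'
  have hch : ContinuousOn (fun u => c * (|1 - 3 / 2 * (u * ψ u) ^ 2| / u)) (Ioc 0 t₁) :=
    continuousOn_const.mul ((continuousOn_id' _).mul hψc).abs_one_sub_sq_div
  have := sub_le_integral_of_hasDerivAt_le (F := fun u => 2 * log u - lam * φ u)
    (f := fun u => (2 - c) / u + c * (|1 - 3 / 2 * (u * ψ u) ^ 2| / u))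
    (fun u hu => ((hasDerivAt_log hu.1.ne').const_mul 2).sub ((hφ u hu).const_mul lam))
    (hinv.add hch) (fun u hu => by
      set X := |1 - 3 / 2 * (u * ψ u) ^ 2|
      have hX := sqrt_two_thirds_mul_one_sub_abs_le (mul_pos hu.1 (hpos u hu)).le
      have key : c * (1 - X) / u ≤ lam * ψ u := by
        rw [div_le_iff₀ hu.1]
        nlinarith [mul_le_mul_of_nonneg_left hX hlam]
      have e : (2 - c) / u + c * (X / u) - (2 * u⁻¹ - lam * ψ u)
          = lam * ψ u - c * (1 - X) / u := by
        field_simp; ring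
      linarith) ht.1 ht.2 le_rfl
  rw [integral_add (hinv.intervalIntegrable_of_Ioc ht.1 ht.2 le_rfl)
    (hch.intervalIntegrable_of_Ioc ht.1 ht.2 le_rfl),
    integral_const_div_of_pos ht.1 (ht.1.trans_le ht.2),
    intervalIntegral.integral_const_mul] at this
  nlinarith [mul_le_mul_of_nonneg_left (hA t ht) (by positivity : (0 : ℝ) ≤ c)]

theorem tendsto_sq_mul_exp_neg_atTop (hlam : √6 < lam) (ht₁ : 0 < t₁)
    (hφ : ∀ t ∈ Ioc 0 t₁, HasDerivAt φ (ψ t) t) (hψc : ContinuousOn ψ (Ioc 0 t₁))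
    (hpos : ∀ t ∈ Ioc 0 t₁, 0 < ψ t)
    (hA : ∀ t ∈ Ioc 0 t₁, ∫ u in t..t₁, |1 - 3 / 2 * (u * ψ u) ^ 2| / u ≤ A) :
    Tendsto (fun t => t ^ 2 * exp (-(lam * φ t))) (𝓝[>] 0) atTop := by
  set c := lam * √(2 / 3)
  have hc : 2 < c := by
    have : √6 * √(2 / 3) = 2 := by
      rw [← sqrt_mul (by norm_num), show (6 : ℝ) * (2 / 3) = 2 ^ 2 by norm_num,
        sqrt_sq zero_le_two]
    nlinarith [mul_lt_mul_of_pos_right hlam (sqrt_pos.2 (by norm_num : (0 : ℝ) < 2 / 3))]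
  have hlim : Tendsto (fun t => (2 * log t₁ - lam * φ t₁ - c * A + (c - 2) * log t₁)
      + -(c - 2) * log t) (𝓝[>] 0) atTop :=
    tendsto_atTop_add_const_left _ _ (tendsto_log_nhdsGT_zero.const_mul_atBot_of_neg
      (by linarith))
  have hW : Tendsto (fun t => 2 * log t - lam * φ t) (𝓝[>] 0) atTop := by
    refine tendsto_atTop_mono' _ ?_ hlim
    filter_upwards [Ioc_mem_nhdsGT ht₁] with t ht
    have := two_mul_log_sub_mul_sub_le ((sqrt_nonneg 6).trans hlam.le) hφ hψc hpos hA ht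
    rw [log_div ht₁.ne' ht.1.ne'] at this
    linarith
  refine (tendsto_exp_atTop.comp hW).congr' ?_
  filter_upwards [Ioc_mem_nhdsGT ht₁] with t ht
  rw [Function.comp_apply, sub_eq_add_neg, exp_add, two_mul, exp_add, exp_log ht.1, sq]

theorem exists_eq_zero_of_integral_le {B : ℝ} (hlam : √6 < lam) (ht₁ : 0 < t₁)
    (hφ : ∀ t ∈ Ioc 0 t₁, HasDerivAt φ (ψ t) t) (hψc : ContinuousOn ψ (Ioc 0 t₁))
    (hA : ∀ t ∈ Ioc 0 t₁, ∫ u in t..t₁, |1 - 3 / 2 * (u * ψ u) ^ 2| / u ≤ A)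
    (hB : ∀ t ∈ Ioc 0 t₁, t ^ 2 * potential lam (φ t) ≤ B) :
    ∃ t ∈ Ioc 0 t₁, ψ t = 0 := by
  by_contra! hne
  have hbdd : ∀ f : ℝ → ℝ, Tendsto f (𝓝[>] 0) atTop →
      (∀ t ∈ Ioc 0 t₁, f t ≤ t ^ 2 * potential lam (φ t)) → False := fun f hf hle => by
    obtain ⟨t, hgt, ht⟩ := ((hf.eventually_gt_atTop B).and (Ioc_mem_nhdsGT ht₁)).exists
    linarith [hle t ht, hB t ht]
  rcases isPreconnected_Ioc.forall_pos_or_forall_neg hψc hne with hpos | hneg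
  · exact hbdd _ (tendsto_sq_mul_exp_neg_atTop hlam ht₁ hφ hψc hpos hA) fun t _ =>
      mul_le_mul_of_nonneg_left (le_add_of_nonneg_left (exp_pos _).le) (sq_nonneg t)
  · refine hbdd _ (tendsto_sq_mul_exp_neg_atTop (φ := fun t => -φ t) hlam ht₁
      (fun t ht => (hφ t ht).neg) hψc.neg (fun t ht => neg_pos.2 (hneg t ht)) (by simpa using hA))
      fun t _ => ?_
    simp only [mul_neg, neg_neg]
    exact mul_le_mul_of_nonneg_left (le_add_of_nonneg_right (exp_pos _).le) (sq_nonneg t)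

theorem exists_lt_integral_sub_inv (hlam : √6 < lam) (ht₀ : 0 < t₀)
    (hφ : ∀ t ∈ Ioc 0 t₀, HasDerivAt φ (ψ t) t)
    (hψ : ∀ t ∈ Ioc 0 t₀, HasDerivAt ψ
      (-K t * ψ t - lam * (exp (lam * φ t) - exp (-(lam * φ t)))) t)
    (hK : ∀ t ∈ Ioc 0 t₀, HasDerivAt K (-(3 / 2) * ψ t ^ 2) t)
    (hcon : ∀ t ∈ Ioc 0 t₀, K t ^ 2 = 3 * potential lam (φ t) + 3 / 2 * ψ t ^ 2)
    (hk1 : ∀ t ∈ Ioc 0 t₀, 1 ≤ t * K t) (A : ℝ) :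
    ∃ t ∈ Ioc 0 t₀, A < ∫ u in t..t₀, (K u - u⁻¹) := by
  by_contra! hA
  have hKpos : ∀ t ∈ Ioc 0 t₀, 0 < K t := fun t ht =>
    pos_of_mul_pos_right (one_pos.trans_le (hk1 t ht)) ht.1.le
  have hK' := fun t (ht : t ∈ Ioc 0 t₀) => neg_deriv_le_sq_of_constraint hcon ht
  set M := t₀ * K t₀ * exp A
  have hM : 0 < M := by have := hKpos t₀ ⟨ht₀, le_rfl⟩; positivity
  have hKM : ∀ t ∈ Ioc 0 t₀, t * K t ≤ M := fun t ht =>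
    (mul_le_mul_exp_integral_sub_inv hK hK' hKpos ht).trans
      (mul_le_mul_of_nonneg_left (exp_le_exp.2 (hA t ht)) (mul_pos ht₀ (hKpos t₀ ⟨ht₀, le_rfl⟩)).le)
  have hψc := HasDerivAt.continuousOn hψ
  have hc : ContinuousOn (fun u => |1 - 3 / 2 * (u * ψ u) ^ 2| / u) (Ioc 0 t₀) :=
    ((continuousOn_id' _).mul hψc).abs_one_sub_sq_div
  have hint : ∀ t ∈ Ioc 0 t₀, ∫ u in t..t₀, |1 - 3 / 2 * (u * ψ u) ^ 2| / u
      ≤ t₀ * K t₀ + (2 * M + 1) * A := fun t ht =>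
    (integral_abs_one_sub_sq_le hK hcon (HasDerivAt.continuousOn hφ) hψc hk1 hKM ht).trans
      (by gcongr; exact hA t ht)
  obtain ⟨t₁, ht₁, hne⟩ := exists_forall_ne_zero_of_integral_le (P := fun u => u * ψ u) ht₀
    (mul_pos (by linarith [sqrt_nonneg 6]) (pow_pos hM 2)) ((continuousOn_id' _).mul hψc)
    (fun a b ha hab hb => abs_mul_sub_mul_le_mul_log_div ((sqrt_nonneg 6).trans_lt hlam)
      hψ hcon hk1 hKM ha hab hb) hint
  have hsub : Ioc 0 t₁ ⊆ Ioc 0 t₀ := Ioc_subset_Ioc_right ht₁.2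
  obtain ⟨t, ht, hψt⟩ := exists_eq_zero_of_integral_le (B := M ^ 2) hlam ht₁.1
    (fun t ht => hφ t (hsub ht)) (hψc.mono hsub)
    (fun t ht => (integral_mono_interval le_rfl ht.2 ht₁.2
      (ae_restrict_of_forall_mem measurableSet_Ioc fun u hu =>
        div_nonneg (abs_nonneg _) (ht.1.trans hu.1).le)
      (hc.intervalIntegrable_of_Ioc ht.1 (ht.2.trans ht₁.2) le_rfl)).trans (hint t (hsub ht)))
    (fun t ht => sq_mul_potential_le hcon hk1 hKM (hsub ht))
  exact hne t ht (by rw [hψt, mul_zero])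

end Cosmology

open intervalIntegral in
theorem stmt19_general (lam : ℝ) (hlam : Real.sqrt 6 < lam) (t₀ : ℝ) (ht₀ : 0 < t₀)
    (K φ ψ : ℝ → ℝ)
    (hφ : ∀ t ∈ Set.Ioc (0 : ℝ) t₀, HasDerivAt φ (ψ t) t)
    (hψ : ∀ t ∈ Set.Ioc (0 : ℝ) t₀, HasDerivAt ψ
      (-K t * ψ t - lam * (Real.exp (lam * φ t) - Real.exp (-(lam * φ t)))) t)
    (hK : ∀ t ∈ Set.Ioc (0 : ℝ) t₀, HasDerivAt K (-(3 / 2) * (ψ t) ^ 2) t)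
    (hcon : ∀ t ∈ Set.Ioc (0 : ℝ) t₀,
      (K t) ^ 2 = 3 * (Real.exp (lam * φ t) + Real.exp (-(lam * φ t)))
        + (3 / 2) * (ψ t) ^ 2)
    (hKpos : ∀ t ∈ Set.Ioc (0 : ℝ) t₀, 0 < K t)
    (hsing : Filter.Tendsto K (nhdsWithin 0 (Set.Ioi 0)) Filter.atTop) :
    Filter.Tendsto (fun t => Real.exp (-∫ u in t..t₀, K u) / t)
      (nhdsWithin 0 (Set.Ioi 0)) (nhds 0) := by
  have hk1 : ∀ t ∈ Ioc 0 t₀, 1 ≤ t * K t := fun t ht =>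
    one_le_mul_of_tendsto_atTop hK (fun _ hs => neg_deriv_le_sq_of_constraint hcon hs) hKpos
      hsing ht
  have hKc : ContinuousOn K (Ioc 0 t₀) := HasDerivAt.continuousOn hK
  exact tendsto_exp_neg_integral_div_of_tendsto ht₀ hKc
    (tendsto_integral_atTop_of_forall_exists_lt (hKc.sub continuousOn_inv_Ioc)
      (fun t ht => sub_nonneg.2 ((inv_le_iff_one_le_mul₀' ht.1).2 (hk1 t ht)))
      (exists_lt_integral_sub_inv hlam ht₀ hφ hψ hK hcon hk1))

open intervalIntegral in
/-- Let `λ > √6` and let `(K, φ)` (with `ψ = φ'`) be a non-trivial scalar field cosmology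
with potential `V(φ) = exp(λφ) + exp(−λφ)` on `(0, t₀]` such that `K(t) → ∞` as `t → 0⁺`.
With the volume element `v(t) = exp(−∫_t^{t₀} K(u) du)`, one has `v(t)/t → 0` as
`t → 0⁺`: near the singularity the volume element expands strictly more slowly than
linearly in proper time. -/
theorem stmt19 (lam : ℝ) (hlam : Real.sqrt 6 < lam) (t₀ : ℝ) (ht₀ : 0 < t₀)
    (K φ ψ : ℝ → ℝ)
    (hφ : ∀ t ∈ Set.Ioc (0 : ℝ) t₀, HasDerivAt φ (ψ t) t)
    (hψ : ∀ t ∈ Set.Ioc (0 : ℝ) t₀, HasDerivAt ψ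
      (-K t * ψ t - lam * (Real.exp (lam * φ t) - Real.exp (-(lam * φ t)))) t)
    (hK : ∀ t ∈ Set.Ioc (0 : ℝ) t₀, HasDerivAt K (-(3 / 2) * (ψ t) ^ 2) t)
    (hcon : ∀ t ∈ Set.Ioc (0 : ℝ) t₀,
      (K t) ^ 2 = 3 * (Real.exp (lam * φ t) + Real.exp (-(lam * φ t)))
        + (3 / 2) * (ψ t) ^ 2)
    (hKpos : ∀ t ∈ Set.Ioc (0 : ℝ) t₀, 0 < K t)
    (hnt : ∃ t ∈ Set.Ioc (0 : ℝ) t₀, ψ t ≠ 0)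
    (hsing : Filter.Tendsto K (nhdsWithin 0 (Set.Ioi 0)) Filter.atTop) :
    Filter.Tendsto (fun t => Real.exp (-∫ u in t..t₀, K u) / t)
      (nhdsWithin 0 (Set.Ioi 0)) (nhds 0) :=
  stmt19_general lam hlam t₀ ht₀ K φ ψ hφ hψ hK hcon hKpos hsing
end
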